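/- arXiv:2410.03628 — 7 statements merged into one kernel-verified Lean document; each statement's English description precedes it below -/
import Mathlib

section
/- For any connected graph with n vertices, m edges, and m×n incidence matrix G over F₂, there exists an n×m matrix T that is (3,2)-sparse (every row has weight at most 3 and every column has weight at most 2) and an n×n permutation matrix P such that T·G·P = H_C, where H_C is the canonical cyclic parity check matrix of the length-n repetition code (H_C = I + C with C the cyclic shift matrix). -/
open Matrix Finset

/-- Hamming weight of a vector over `F₂`. -/
def hwt {E : Type*} [Fintype E] (v : E → ZMod 2) : ℕ :=
  (Finset.univ.filter fun e => v e ≠ 0).card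

/-- A matrix over `F₂` is `(r, c)`-sparse: every row has weight at most `r` and every
column has weight at most `c`. -/
def Sparse {A B : Type*} [Fintype A] [Fintype B]
    (M : Matrix A B (ZMod 2)) (r c : ℕ) : Prop :=
  (∀ i, hwt (M i) ≤ r) ∧ (∀ j, hwt (fun i => M i j) ≤ c)

/-- `P` is a permutation matrix. -/
def IsPermMatrix {n : ℕ} (P : Matrix (Fin n) (Fin n) (ZMod 2)) : Prop :=
  ∃ σ : Equiv.Perm (Fin n), ∀ i j, P i j = if σ i = j then 1 else 0

/-- `G` is the incidence matrix of a graph: every row (edge) has exactly two `1`s. -/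
def IsIncidence {m n : ℕ} (G : Matrix (Fin m) (Fin n) (ZMod 2)) : Prop :=
  ∀ e, hwt (G e) = 2

/-- The graph on the `n` vertices determined by an incidence matrix:
`i` and `j` are adjacent iff some edge contains both. -/
def incGraph {m n : ℕ} (G : Matrix (Fin m) (Fin n) (ZMod 2)) : SimpleGraph (Fin n) :=
  SimpleGraph.fromRel (fun i j => ∃ e, G e i ≠ 0 ∧ G e j ≠ 0)

/-- The canonical cyclic parity-check matrix `H_C = I + C` of the length-`n` repetition
code: `(H_C)_{i,j} = 1` iff `j = i` or `j = i + 1 (mod n)`. -/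
def HC (n : ℕ) : Matrix (Fin n) (Fin n) (ZMod 2) :=
  (1 : Matrix (Fin n) (Fin n) (ZMod 2)) + (Matrix.of fun i j : Fin n => if (j : ℕ) = ((i : ℕ) + 1) % n then 1 else 0)

/-!
A connected graph has a spanning tree, and the cube of a tree is Hamiltonian with every tree
edge used at most twice (Sekanina's argument). The spanning tree is grown as a `JoinTree`, where
`join A e B` hangs `B` below the root of `A` by the edge `e`. Its tour runs through `A` from the
root and then through `B` backwards, ending at the root of `B`, a neighbour of the root, so it
closes up into a cycle. Consecutive vertices `u, v` of the cycle are linked by at most three tree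
edges, whose rows of `G` sum to `e_u + e_v` over `F₂`: row `i` of `T` picks the edges linking
the `i`-th vertex to the next one, and `P` lists the vertices in tour order.
-/

theorem hwt_natCast_le_sum {ι : Type*} [Fintype ι] (c : ι → ℕ) :
    hwt (fun i => (c i : ZMod 2)) ≤ ∑ i, c i := by
  calc hwt (fun i => (c i : ZMod 2))
      ≤ ∑ i ∈ univ.filter (fun i => (c i : ZMod 2) ≠ 0), c i := by
        rw [hwt, card_eq_sum_ones]
        refine sum_le_sum fun i hi => Nat.one_le_iff_ne_zero.2 ?_
        rintro h
        simp [h] at hi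
    _ ≤ ∑ i, c i := sum_le_sum_of_subset (filter_subset _ _)

theorem eq_single_add_single_of_hwt_eq_two {ι : Type*} [Fintype ι] [DecidableEq ι]
    {v : ι → ZMod 2} (hv : hwt v = 2) {a b : ι} (ha : v a ≠ 0) (hb : v b ≠ 0) (hab : a ≠ b) :
    v = Pi.single a 1 + Pi.single b 1 := by
  have hsupp : univ.filter (fun i => v i ≠ 0) = {a, b} :=
    (eq_of_subset_of_card_le (by intro i; simp; rintro (rfl | rfl) <;> assumption)
      (by rw [card_pair hab]; exact hv.le)).symm
  have hone : ∀ x : ZMod 2, x ≠ 0 → x = 1 := by decide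
  funext i
  by_cases hia : i = a
  · subst hia; simp [hone _ ha, hab]
  by_cases hib : i = b
  · subst hib; simp [hone _ hb, Ne.symm hab]
  have : v i = 0 := by simpa [hia, hib] using Finset.ext_iff.1 hsupp i
  simp [this, hia, hib]

section Joins

variable {V E : Type*} [DecidableEq V]

def Joins (G : Matrix E V (ZMod 2)) (a : V) (s : Multiset E) (b : V) : Prop :=
  (s.map fun e => G e).sum = Pi.single a 1 + Pi.single b 1

variable {G : Matrix E V (ZMod 2)} {a b c : V} {s t : Multiset E}

theorem joins_singleton_iff {e : E} : Joins G a {e} b ↔ G e = Pi.single a 1 + Pi.single b 1 := by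
  simp [Joins]

theorem joins_zero (a : V) : Joins G a 0 a := by
  simp [Joins, ZModModule.add_self]

theorem Joins.symm (h : Joins G a s b) : Joins G b s a := by
  rw [Joins, h, add_comm]

theorem Joins.add (hs : Joins G a s b) (ht : Joins G b t c) : Joins G a (s + t) c := by
  unfold Joins at *
  rw [Multiset.map_add, Multiset.sum_add, hs, ht, ZModModule.add_add_add_cancel]

end Joins

inductive LabeledPath {α β : Type*} (R : α → β → α → Prop) : α → α → List α → List β → Prop
  | nil (a : α) : LabeledPath R a a [a] []
  | cons {a b c : α} {s : β} {L : List α} {S : List β} :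
      R a s b → LabeledPath R b c L S → LabeledPath R a c (a :: L) (s :: S)

namespace LabeledPath

variable {α β : Type*} {R : α → β → α → Prop} {a b c d : α} {s : β} {L L' : List α}
  {S S' : List β}

theorem length_eq (h : LabeledPath R a b L S) : L.length = S.length + 1 := by
  induction h with
  | nil => rfl
  | cons _ _ ih => simp [ih]

theorem append (h : LabeledPath R a b L S) (hs : R b s c) (h' : LabeledPath R c d L' S') :
    LabeledPath R a d (L ++ L') (S ++ s :: S') := by
  induction h with
  | nil a => exact .cons hs h'
  | cons hr _ ih => exact .cons hr (ih hs)

theorem reverse (hR : ∀ a s b, R a s b → R b s a) (h : LabeledPath R a b L S) :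
    LabeledPath R b a L.reverse S.reverse := by
  induction h with
  | nil a => exact .nil a
  | cons hr _ ih =>
    simpa using ih.append (hR _ _ _ hr) (.nil _)

theorem getElem_zero (h : LabeledPath R a b L S) (h0 : 0 < L.length) : L[0] = a := by
  cases h <;> rfl

theorem getLast_eq (h : LabeledPath R a b L S) (hL : L ≠ []) : L.getLast hL = b := by
  induction h with
  | nil => rfl
  | cons _ h' ih =>
    rw [List.getLast_cons (by have := h'.length_eq; rintro rfl; simp at this)]
    exact ih _

theorem rel_getElem (h : LabeledPath R a b L S) (i : ℕ) (hi : i + 1 < L.length) :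
    R L[i] (S[i]'(by have := h.length_eq; omega)) L[i + 1] := by
  induction h generalizing i with
  | nil => simp at hi
  | @cons a b c s L S hr h' ih =>
    cases i with
    | zero => simpa [h'.getElem_zero] using hr
    | succ i => simpa using ih i (by simpa using hi)

theorem rel_getElem_mod (h : LabeledPath R a b L S) (hba : R b s a) (i : ℕ) (hi : i < L.length) :
    R L[i] ((S ++ [s])[i]'(by have := h.length_eq; simp; omega))
      (L[(i + 1) % L.length]'(Nat.mod_lt _ (by omega))) := by
  have hlen := h.length_eq
  rcases Nat.lt_or_ge (i + 1) L.length with hlt | hge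
  · simp only [Nat.mod_eq_of_lt hlt, List.getElem_append_left (show i < S.length by omega)]
    exact h.rel_getElem i hlt
  · have hi' : i = S.length := by omega
    have hlast : L[i] = b := by
      rw [← h.getLast_eq (List.ne_nil_of_length_pos (by omega)), List.getLast_eq_getElem]
      congr 1; omega
    simp only [show (i + 1) % L.length = 0 by rw [show i + 1 = L.length by omega, Nat.mod_self],
      h.getElem_zero, hlast]
    simpa [hi'] using hba

end LabeledPath

inductive JoinTree (V E : Type*)
  | leaf : V → JoinTree V E
  | join : JoinTree V E → E → JoinTree V E → JoinTree V E

namespace JoinTree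

variable {V E : Type*}

def root : JoinTree V E → V
  | leaf v => v
  | join A _ _ => A.root

def verts : JoinTree V E → Multiset V
  | leaf v => {v}
  | join A _ B => A.verts + B.verts

def edges : JoinTree V E → Multiset E
  | leaf _ => 0
  | join A e B => A.edges + {e} + B.edges

theorem root_mem_verts (T : JoinTree V E) : T.root ∈ T.verts := by
  induction T with
  | leaf v => simp [root, verts]
  | join A e B ihA _ => exact Multiset.mem_add.2 (Or.inl ihA)

def last : JoinTree V E → V
  | leaf v => v
  | join _ _ B => B.root

def link : JoinTree V E → Multiset E
  | leaf _ => 0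
  | join _ e _ => {e}

def tour : JoinTree V E → List V
  | leaf v => [v]
  | join A _ B => A.tour ++ B.tour.reverse

/-- The middle step of `join A e B` goes from the end of `A.tour` back to the root of `A`, across
`e`, and down to the end of `B.tour`. -/
def tourSteps : JoinTree V E → List (Multiset E)
  | leaf _ => []
  | join A e B => A.tourSteps ++ (A.link + {e} + B.link) :: B.tourSteps.reverse

theorem coe_tour (T : JoinTree V E) : (T.tour : Multiset V) = T.verts := by
  induction T with
  | leaf v => rfl
  | join A e B ihA ihB => rw [tour, verts, ← ihA, ← ihB, ← Multiset.coe_reverse B.tour, Multiset.coe_add]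

theorem card_link_le (T : JoinTree V E) : T.link.card ≤ 1 := by
  cases T <;> simp [link]

theorem card_le_three_of_mem_tourSteps (T : JoinTree V E) :
    ∀ s ∈ T.tourSteps, s.card ≤ 3 := by
  induction T with
  | leaf v => simp [tourSteps]
  | join A e B ihA ihB =>
    have := A.card_link_le
    have := B.card_link_le
    simp only [tourSteps, List.mem_append, List.mem_cons, List.mem_reverse]
    rintro s (hs | rfl | hs)
    · exact ihA s hs
    · simp; omega
    · exact ihB s hs

/-- The link is counted on the left because the middle step of the parent reuses it. -/
theorem sum_tourSteps_add_link_le (T : JoinTree V E) :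
    T.tourSteps.sum + T.link ≤ 2 • T.edges := by
  induction T with
  | leaf v => simp [tourSteps, link]
  | join A e B ihA ihB =>
    calc (A.join e B).tourSteps.sum + (A.join e B).link
        = (A.tourSteps.sum + A.link) + (B.tourSteps.sum + B.link) + 2 • {e} := by
          simp only [tourSteps, link, List.sum_append, List.sum_cons, List.sum_reverse]
          abel
      _ ≤ 2 • A.edges + 2 • B.edges + 2 • {e} := by gcongr
      _ = 2 • (A.join e B).edges := by simp only [edges, nsmul_add]; abel

variable [DecidableEq V]

def IsTreeIn (G : Matrix E V (ZMod 2)) : JoinTree V E → Prop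
  | leaf _ => True
  | join A e B => A.IsTreeIn G ∧ B.IsTreeIn G ∧ Joins G A.root {e} B.root

variable {G : Matrix E V (ZMod 2)}

theorem IsTreeIn.joins_link {T : JoinTree V E} (hT : T.IsTreeIn G) :
    Joins G T.root T.link T.last := by
  cases T with
  | leaf v => exact joins_zero v
  | join A e B => exact hT.2.2

theorem IsTreeIn.labeledPath_tour {T : JoinTree V E} (hT : T.IsTreeIn G) :
    LabeledPath (Joins G) T.root T.last T.tour T.tourSteps := by
  induction T with
  | leaf v => exact .nil v
  | join A e B ihA ihB =>
    obtain ⟨hA, hB, he⟩ := hT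
    exact (ihA hA).append ((hA.joins_link.symm.add he).add hB.joins_link)
      ((ihB hB).reverse fun _ _ _ h => h.symm)

def graft (x : V) (e : E) (y : V) : JoinTree V E → JoinTree V E
  | leaf v => if v = x then join (leaf v) e (leaf y) else leaf v
  | join A e' B => join (A.graft x e y) e' (B.graft x e y)

variable (x : V) (e : E) (y : V)

theorem root_graft (T : JoinTree V E) : (T.graft x e y).root = T.root := by
  induction T with
  | leaf v => unfold graft; split_ifs <;> rfl
  | join A e' B ihA _ => exact ihA

theorem verts_graft (T : JoinTree V E) :
    (T.graft x e y).verts = T.verts + T.verts.count x • {y} := by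
  induction T with
  | leaf v => by_cases h : v = x <;> simp [graft, verts, h, eq_comm (a := x)]
  | join A e' B ihA ihB => simp only [graft, verts, ihA, ihB, Multiset.count_add, add_nsmul]; abel

theorem edges_graft (T : JoinTree V E) :
    (T.graft x e y).edges = T.edges + T.verts.count x • {e} := by
  induction T with
  | leaf v => by_cases h : v = x <;> simp [graft, edges, verts, h, eq_comm (a := x)]
  | join A e' B ihA ihB =>
    simp only [graft, edges, verts, ihA, ihB, Multiset.count_add, add_nsmul]; abel

variable {x e y}

theorem IsTreeIn.graft {T : JoinTree V E} (hT : T.IsTreeIn G) (he : Joins G x {e} y) :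
    (T.graft x e y).IsTreeIn G := by
  induction T with
  | leaf v => unfold JoinTree.graft; split_ifs with h <;> simp [IsTreeIn, root, h, he]
  | join A e' B ihA ihB =>
    exact ⟨ihA hT.1, ihB hT.2.1, by simpa only [root_graft] using hT.2.2⟩

theorem IsTreeIn.mem_verts_of_mem_edges {T : JoinTree V E} (hT : T.IsTreeIn G)
    (he : e ∈ T.edges) {w : V} (hw : G e w ≠ 0) : w ∈ T.verts := by
  induction T with
  | leaf v => simp [edges] at he
  | join A e' B ihA ihB =>
    simp only [edges, Multiset.mem_add, Multiset.mem_singleton] at he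
    simp only [verts, Multiset.mem_add]
    rcases he with (he | rfl) | he
    · exact .inl (ihA hT.1 he)
    · have := congrFun (joins_singleton_iff.1 hT.2.2) w
      by_cases hA : w = A.root
      · exact .inl (hA ▸ A.root_mem_verts)
      by_cases hB : w = B.root
      · exact .inr (hB ▸ B.root_mem_verts)
      simp [hA, hB, hw] at this
    · exact .inr (ihB hT.2.1 he)

theorem verts_graft_of_nodup {T : JoinTree V E} (hv : T.verts.Nodup) (hx : x ∈ T.verts) :
    (T.graft x e y).verts = y ::ₘ T.verts := by
  rw [verts_graft, Multiset.count_eq_one_of_mem hv hx, one_nsmul, add_comm, Multiset.singleton_add]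

theorem edges_graft_of_nodup {T : JoinTree V E} (hv : T.verts.Nodup) (hx : x ∈ T.verts) :
    (T.graft x e y).edges = e ::ₘ T.edges := by
  rw [edges_graft, Multiset.count_eq_one_of_mem hv hx, one_nsmul, add_comm, Multiset.singleton_add]

theorem IsTreeIn.notMem_edges {T : JoinTree V E} (hT : T.IsTreeIn G) (hx : x ∈ T.verts)
    (hy : y ∉ T.verts) (hxy : Joins G x {e} y) : e ∉ T.edges := by
  have hxy' : x ≠ y := by rintro rfl; exact hy hx
  exact fun h => hy (hT.mem_verts_of_mem_edges h (by simp [joins_singleton_iff.1 hxy, hxy']))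

theorem IsTreeIn.exists_spanning [Fintype V]
    (hcross : ∀ S : Finset V, ∀ a ∈ S, ∀ b ∉ S, ∃ x ∈ S, ∃ y ∉ S, ∃ e, Joins G x {e} y)
    {T : JoinTree V E} (hT : T.IsTreeIn G) (hv : T.verts.Nodup) (he : T.edges.Nodup) :
    ∃ T' : JoinTree V E, T'.IsTreeIn G ∧ T'.verts.Nodup ∧ T'.edges.Nodup ∧ ∀ v, v ∈ T'.verts := by
  by_cases hall : ∀ v, v ∈ T.verts
  · exact ⟨T, hT, hv, he, hall⟩
  obtain ⟨b, hb⟩ := not_forall.1 hall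
  obtain ⟨x, hx, y, hy, e, hxy⟩ :=
    hcross T.verts.toFinset T.root (by simpa using T.root_mem_verts) b (by simpa using hb)
  rw [Multiset.mem_toFinset] at hx hy
  have hverts := verts_graft_of_nodup (e := e) (y := y) hv hx
  have hv' : (T.graft x e y).verts.Nodup := by rw [hverts]; exact Multiset.nodup_cons.2 ⟨hy, hv⟩
  have he' : (T.graft x e y).edges.Nodup := by
    rw [edges_graft_of_nodup hv hx]; exact Multiset.nodup_cons.2 ⟨hT.notMem_edges hx hy hxy, he⟩
  have : Fintype.card V - (T.graft x e y).verts.card < Fintype.card V - T.verts.card := by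
    have : T.verts.card < Fintype.card V := by
      rw [← Multiset.toFinset_card_of_nodup hv]
      exact card_lt_univ_of_notMem (x := b) (by simpa using hb)
    rw [hverts, Multiset.card_cons]
    omega
  exact (hT.graft hxy).exists_spanning hcross hv' he'
termination_by Fintype.card V - T.verts.card

end JoinTree

theorem exists_joins_crossing {n m : ℕ} {G : Matrix (Fin m) (Fin n) (ZMod 2)}
    (hinc : IsIncidence G) (hconn : (incGraph G).Connected) (S : Finset (Fin n)) (a : Fin n)
    (ha : a ∈ S) (b : Fin n) (hb : b ∉ S) : ∃ x ∈ S, ∃ y ∉ S, ∃ e, Joins G x {e} y := by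
  obtain ⟨p⟩ := hconn.preconnected a b
  obtain ⟨d, -, hx, hy⟩ := p.exists_boundary_dart S ha hb
  obtain ⟨hne, hrel⟩ := (SimpleGraph.fromRel_adj _ _ _).1 d.adj
  obtain ⟨e, h₁, h₂⟩ : ∃ e, G e d.fst ≠ 0 ∧ G e d.snd ≠ 0 :=
    hrel.elim id fun ⟨e, h₂, h₁⟩ => ⟨e, h₁, h₂⟩
  exact ⟨_, hx, _, hy, e, joins_singleton_iff.2 (eq_single_add_single_of_hwt_eq_two (hinc e) h₁ h₂ hne)⟩

theorem vecMul_natCast_count {E V : Type*} [Fintype E] [DecidableEq E] (s : Multiset E)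
    (G : Matrix E V (ZMod 2)) :
    (fun e => (s.count e : ZMod 2)) ᵥ* G = (s.map fun e => G e).sum := by
  ext v
  rw [Finset.sum_multiset_map_count, Finset.sum_apply, vecMul, dotProduct]
  refine (Finset.sum_subset (subset_univ s.toFinset) fun e _ he => ?_).symm.trans ?_
  · simp [Multiset.count_eq_zero.2 (by simpa using he)]
  · simp [nsmul_eq_mul]

theorem exists_sparse_mul_perm_eq_HC {n m : ℕ} (G : Matrix (Fin m) (Fin n) (ZMod 2))
    (f : Fin n ≃ Fin n) (s : Fin n → Multiset (Fin m))
    (hjoin : ∀ i j : Fin n, (j : ℕ) = (i + 1) % n → Joins G (f i) (s i) (f j))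
    (hcard : ∀ i, (s i).card ≤ 3) (hload : ∀ e, (∑ i, s i).count e ≤ 2) :
    ∃ (T : Matrix (Fin n) (Fin m) (ZMod 2)) (P : Matrix (Fin n) (Fin n) (ZMod 2)),
      Sparse T 3 2 ∧ IsPermMatrix P ∧ T * G * P = HC n := by
  set T : Matrix (Fin n) (Fin m) (ZMod 2) := Matrix.of fun i e => ((s i).count e : ZMod 2)
  refine ⟨T, f.symm.toPEquiv.toMatrix, ⟨fun i => ?_, fun e => ?_⟩, ⟨f.symm, fun i j => ?_⟩, ?_⟩
  · calc hwt (T i) ≤ ∑ e, (s i).count e := hwt_natCast_le_sum _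
      _ = (s i).card := Multiset.sum_count_eq_card fun e _ => mem_univ e
      _ ≤ 3 := hcard i
  · calc hwt (fun i => T i e) ≤ ∑ i, (s i).count e := hwt_natCast_le_sum _
      _ = (∑ i, s i).count e := Multiset.count_sum'.symm
      _ ≤ 2 := hload e
  · simp [PEquiv.toMatrix_apply]
  · ext i j
    obtain ⟨i', hi'⟩ : ∃ i' : Fin n, (i' : ℕ) = (i + 1) % n := ⟨⟨_, Nat.mod_lt _ i.pos⟩, rfl⟩
    have hrow : T i ᵥ* G = Pi.single (f i) 1 + Pi.single (f i') 1 :=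
      (vecMul_natCast_count _ G).trans (hjoin i i' hi')
    rw [PEquiv.mul_toMatrix_toPEquiv, submatrix_apply, id, Equiv.symm_symm]
    change (T i ᵥ* G) (f j) = _
    simp [hrow, HC, Pi.single_apply, one_apply, eq_comm, ← hi', Fin.ext_iff]

theorem exists_sparse_mul_perm_eq_HC_of_list {n m : ℕ} (G : Matrix (Fin m) (Fin n) (ZMod 2))
    (L : List (Fin n)) (hL : L.Nodup) (hmem : ∀ v, v ∈ L) (S : List (Multiset (Fin m)))
    (hlen : S.length = L.length)
    (hjoin : ∀ i (hi : i < L.length),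
      Joins G L[i] (S[i]'(hlen ▸ hi)) (L[(i + 1) % L.length]'(Nat.mod_lt _ (by omega))))
    (hcard : ∀ s ∈ S, s.card ≤ 3) (hload : ∀ e, S.sum.count e ≤ 2) :
    ∃ (T : Matrix (Fin n) (Fin m) (ZMod 2)) (P : Matrix (Fin n) (Fin n) (ZMod 2)),
      Sparse T 3 2 ∧ IsPermMatrix P ∧ T * G * P = HC n := by
  have hLn : L.length = n := by
    simpa using Fintype.card_congr (List.Nodup.getEquivOfForallMemList L hL hmem)
  refine exists_sparse_mul_perm_eq_HC G
    ((finCongr hLn.symm).trans (List.Nodup.getEquivOfForallMemList L hL hmem))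
    (fun i => S[i]'(by omega)) (fun i j hj => ?_) (fun i => hcard _ (List.getElem_mem _))
    (fun e => ?_)
  · simpa [← hj, hLn] using hjoin i (by omega)
  · have : ∑ i : Fin n, S[i] = S.sum :=
      (Fin.sum_congr' (fun i : Fin S.length => S[i.1]) (hlen.trans hLn).symm).trans
        (Fin.sum_univ_getElem S)
    rw [this]; exact hload e

/-- **SkipTree.** For any connected graph with incidence matrix
`G ∈ F₂^{m×n}`, there exist a `(3,2)`-sparse matrix `T ∈ F₂^{n×m}` and a permutation
matrix `P` with `T·G·P = H_C`. -/
theorem skipTree {n m : ℕ} (G : Matrix (Fin m) (Fin n) (ZMod 2))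
    (hinc : IsIncidence G) (hconn : (incGraph G).Connected) :
    ∃ (T : Matrix (Fin n) (Fin m) (ZMod 2)) (P : Matrix (Fin n) (Fin n) (ZMod 2)),
      Sparse T 3 2 ∧ IsPermMatrix P ∧ T * G * P = HC n := by
  obtain ⟨v₀⟩ := hconn.nonempty
  obtain ⟨T, hT, hverts, hedges, hall⟩ :=
    (show (JoinTree.leaf v₀ : JoinTree (Fin n) (Fin m)).IsTreeIn G from trivial).exists_spanning
      (exists_joins_crossing hinc hconn) (Multiset.nodup_singleton v₀) Multiset.nodup_zero
  have hpath := hT.labeledPath_tour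
  refine exists_sparse_mul_perm_eq_HC_of_list G T.tour
    (by rw [← Multiset.coe_nodup, T.coe_tour]; exact hverts)
    (fun v => by rw [← Multiset.mem_coe, T.coe_tour]; exact hall v)
    (T.tourSteps ++ [T.link]) (by simp [hpath.length_eq])
    (hpath.rel_getElem_mod hT.joins_link.symm) ?_ fun e => ?_
  · simp only [List.mem_append, List.mem_singleton]
    rintro s (hs | rfl)
    · exact T.card_le_three_of_mem_tourSteps s hs
    · exact T.card_link_le.trans (by norm_num)
  · calc (T.tourSteps ++ [T.link]).sum.count e ≤ (2 • T.edges).count e := by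
          simpa using Multiset.count_le_of_le e T.sum_tourSteps_add_link_le
      _ ≤ 2 := by simpa using Multiset.nodup_iff_count_le_one.1 hedges e
end

section
/- For any connected graph with n vertices, m edges, and m×n incidence matrix G over F₂, there exists an (n−1)×m matrix T' that is (3,2)-sparse and an n×n permutation matrix P' such that T'·G·P' = H_R, where H_R ∈ F₂^{(n−1)×n} is the canonical full-rank parity check matrix of the repetition code (row i has 1s in columns i and i+1). -/
/-!
Order the vertices `v₀, …, v_{n-1}` so that consecutive vertices are joined by walks of length at
most three which together traverse every edge at most twice. Such an order is built recursively:
from the root `r` pick a neighbour `c`, let `C` be the component of `c` in the graph minus `r`,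
order `S \ C` from `r` to a neighbour `w₁` of `r` and `C` from `c` to a neighbour `w₂` of `c`, and
join the first order to the reverse of the second by the walk `w₁ r c w₂`. Row `i` of `T'` picks
the rows of `G` along the `i`-th walk, so row `i` of `T' G` is the boundary `e_{vᵢ} + e_{vᵢ₊₁}`,
and `P'` renumbers `vⱼ` as `j`. The walk lengths bound the row weights of `T'`, the edge
multiplicities its column weights.
-/

open Matrix Finset

/-- The canonical full-rank parity-check matrix `H_R ∈ F₂^{(n−1)×n}` of the repetition
code: row `i` has `1`s in columns `i` and `i+1`. -/
def HR (n : ℕ) : Matrix (Fin (n - 1)) (Fin n) (ZMod 2) :=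
  Matrix.of fun i j => if (j : ℕ) = (i : ℕ) ∨ (j : ℕ) = (i : ℕ) + 1 then 1 else 0

open Relation

namespace SkipTree

variable {V : Type*}

def AdjIn (H : SimpleGraph V) (S : Finset V) (x y : V) : Prop := x ∈ S ∧ y ∈ S ∧ H.Adj x y

instance (H : SimpleGraph V) (S : Finset V) : Std.Symm (AdjIn H S) :=
  ⟨fun _ _ ⟨hx, hy, hxy⟩ => ⟨hy, hx, hxy.symm⟩⟩

def ConnectedOn (H : SimpleGraph V) (S : Finset V) : Prop :=
  ∀ a ∈ S, ∀ b ∈ S, ReflTransGen (AdjIn H S) a b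

variable {H : SimpleGraph V}

lemma connectedOn_of_forall_reflTransGen {S : Finset V} {r : V}
    (h : ∀ y ∈ S, ReflTransGen (AdjIn H S) r y) : ConnectedOn H S :=
  fun a ha b hb => (Std.Symm.symm _ _ (h a ha)).trans (h b hb)

lemma connectedOn_univ [Fintype V] (hH : H.Connected) : ConnectedOn H univ := fun a _ b _ =>
  ReflTransGen.mono (fun _ _ hxy => ⟨mem_univ _, mem_univ _, hxy⟩) _ _
    ((SimpleGraph.reachable_iff_reflTransGen a b).1 (hH.preconnected a b))

lemma ConnectedOn.exists_adj {S : Finset V} (hS : ConnectedOn H S) {r x : V} (hr : r ∈ S)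
    (hx : x ∈ S) (hxr : x ≠ r) : ∃ c ∈ S, H.Adj r c := by
  rcases (hS r hr x hx).cases_head with rfl | ⟨c, ⟨-, hc, hrc⟩, -⟩
  exacts [absurd rfl hxr, ⟨c, hc, hrc⟩]

lemma connectedOn_filter_reflTransGen (T : Finset V) (c : V)
    [DecidablePred (ReflTransGen (AdjIn H T) c)] :
    ConnectedOn H (T.filter (ReflTransGen (AdjIn H T) c)) := by
  refine connectedOn_of_forall_reflTransGen (r := c) fun y hy => ?_
  obtain ⟨hyT, hcy⟩ := mem_filter.1 hy
  clear hy
  induction hcy with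
  | refl => exact .refl
  | tail hcb hba ih =>
    obtain ⟨hbT, haT, hab⟩ := hba
    exact (ih hbT).tail ⟨mem_filter.2 ⟨hbT, hcb⟩, mem_filter.2 ⟨haT, hcb.tail ⟨hbT, haT, hab⟩⟩, hab⟩

/-- A path from `r` that enters `C` can only leave it through `r`. -/
lemma ConnectedOn.sdiff [DecidableEq V] {S C : Finset V} (hS : ConnectedOn H S) {r : V}
    (hr : r ∈ S) (hC : ∀ a ∈ C, ∀ b ∈ S, b ≠ r → H.Adj a b → b ∈ C) :
    ConnectedOn H (S \ C) := by
  have key : ∀ y, ReflTransGen (AdjIn H S) r y → y ∈ C ∨ ReflTransGen (AdjIn H (S \ C)) r y := by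
    intro y hy
    induction hy with
    | refl => exact Or.inr .refl
    | @tail b a _ hba ih =>
      obtain ⟨hbS, haS, hab⟩ := hba
      by_cases haC : a ∈ C
      · exact Or.inl haC
      by_cases hbC : b ∈ C
      · obtain rfl : a = r := by_contra fun har => haC (hC b hbC a haS har hab)
        exact Or.inr .refl
      exact Or.inr ((ih.resolve_left hbC).tail
        ⟨mem_sdiff.2 ⟨hbS, hbC⟩, mem_sdiff.2 ⟨haS, haC⟩, hab⟩)
  exact connectedOn_of_forall_reflTransGen fun y hy =>
    (key y (hS r hr y (mem_sdiff.1 hy).1)).resolve_left (mem_sdiff.1 hy).2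

section

variable [DecidableEq V]

def edgeVec (p : Sym2 V) : V → ZMod 2 :=
  Sym2.lift ⟨fun x y v => (if v = x then 1 else 0) + (if v = y then 1 else 0),
    fun _ _ => funext fun _ => add_comm _ _⟩ p

@[simp] lemma edgeVec_mk (x y v : V) :
    edgeVec s(x, y) v = (if v = x then 1 else 0) + (if v = y then 1 else 0) := rfl

lemma edgeVec_add_edgeVec (a b c : V) : edgeVec s(a, b) + edgeVec s(b, c) = edgeVec s(a, c) := by
  funext v
  simp only [Pi.add_apply, edgeVec_mk]
  split_ifs <;> decide

@[simp] lemma edgeVec_self (a : V) : edgeVec s(a, a) = 0 := by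
  funext v
  simp only [edgeVec_mk, Pi.zero_apply]
  split_ifs <;> decide

lemma edgeVec_injOn : Set.InjOn (edgeVec (V := V)) {p | ¬ p.IsDiag} := by
  intro p hp q hq h
  induction p using Sym2.ind with | _ x y => ?_
  induction q using Sym2.ind with | _ a b => ?_
  have hxy : x ≠ y := hp
  have hx := congrFun h x
  have hy := congrFun h y
  simp only [edgeVec_mk, if_neg hxy, if_neg hxy.symm] at hx hy
  rw [Sym2.eq_iff]
  by_cases h1 : x = a <;> by_cases h2 : x = b <;> by_cases h3 : y = a <;> by_cases h4 : y = b <;>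
    simp_all

lemma edgeVec_mk_apply_of_injective {W : Type*} [DecidableEq W] {σ : W → V}
    (hσ : Function.Injective σ) (a b v : W) :
    edgeVec s(σ a, σ b) (σ v) = edgeVec s(a, b) v := by
  simp [hσ.eq_iff]

def hop (a b : V) : List (Sym2 V) := if a = b then [] else [s(a, b)]

lemma length_hop_le (a b : V) : (hop a b).length ≤ 1 := by
  unfold hop; split_ifs <;> simp

lemma mem_hop {a b : V} {p : Sym2 V} : p ∈ hop a b ↔ a ≠ b ∧ p = s(a, b) := by
  unfold hop; split_ifs <;> simp [*]

lemma sum_map_edgeVec_hop (a b : V) : ((hop a b).map edgeVec).sum = edgeVec s(a, b) := by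
  unfold hop; split_ifs with h <;> simp [h]

lemma hop_comm (a b : V) : hop a b = hop b a := by
  unfold hop; split_ifs <;> simp_all [eq_comm, Sym2.eq_swap]

lemma mem_edgeSet_of_mem_hop {H : SimpleGraph V} {a b : V} (hab : a = b ∨ H.Adj a b)
    {p : Sym2 V} (hp : p ∈ hop a b) : p ∈ H.edgeSet := by
  obtain ⟨hne, rfl⟩ := mem_hop.1 hp
  exact hab.resolve_left hne

lemma mem_of_mem_hop {a b : V} {p : Sym2 V} (hp : p ∈ hop a b) {x : V} (hx : x ∈ p) :
    x = a ∨ x = b := by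
  obtain ⟨-, rfl⟩ := mem_hop.1 hp
  exact Sym2.mem_iff.1 hx

/-- Stands for a walk of length at most three from `a` to `b`: only its edges and their
`F₂`-boundary are recorded, which is all the matrix identity uses. -/
structure IsShortLink (H : SimpleGraph V) (S : Finset V) (a b : V) (w : List (Sym2 V)) :
    Prop where
  length_le : w.length ≤ 3
  edge : ∀ p ∈ w, p ∈ H.edgeSet
  support : ∀ p ∈ w, ∀ x ∈ p, x ∈ S
  sum_edgeVec : (w.map edgeVec).sum = edgeVec s(a, b)

variable {H : SimpleGraph V}

lemma IsShortLink.symm {S : Finset V} {a b : V} {w : List (Sym2 V)}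
    (h : IsShortLink H S a b w) : IsShortLink H S b a w :=
  ⟨h.length_le, h.edge, h.support, h.sum_edgeVec.trans (by rw [Sym2.eq_swap])⟩

lemma IsShortLink.mono {S T : Finset V} (hST : S ⊆ T) {a b : V} {w : List (Sym2 V)}
    (h : IsShortLink H S a b w) : IsShortLink H T a b w :=
  ⟨h.length_le, h.edge, fun p hp x hx => hST (h.support p hp x hx), h.sum_edgeVec⟩

lemma isShortLink_hop_hop_hop {S : Finset V} {a b c d : V} (ha : a ∈ S) (hb : b ∈ S)
    (hc : c ∈ S) (hd : d ∈ S) (hab : a = b ∨ H.Adj a b) (hbc : H.Adj b c)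
    (hcd : c = d ∨ H.Adj c d) :
    IsShortLink H S a d (hop a b ++ hop b c ++ hop c d) where
  length_le := by
    simp only [List.length_append]
    linarith [length_hop_le a b, length_hop_le b c, length_hop_le c d]
  edge p hp := by
    simp only [List.mem_append] at hp
    rcases hp with (hp | hp) | hp
    exacts [mem_edgeSet_of_mem_hop hab hp, mem_edgeSet_of_mem_hop (Or.inr hbc) hp,
      mem_edgeSet_of_mem_hop hcd hp]
  support p hp x hx := by
    simp only [List.mem_append] at hp
    rcases hp with (hp | hp) | hp <;> rcases mem_of_mem_hop hp hx with rfl | rfl <;> assumption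
  sum_edgeVec := by
    simp only [List.map_append, List.sum_append, sum_map_edgeVec_hop, edgeVec_add_edgeVec]

inductive LinkChain (H : SimpleGraph V) (S : Finset V) :
    V → V → List V → List (List (Sym2 V)) → Prop
  | nil (v : V) : LinkChain H S v v [v] []
  | cons {a b c : V} {w : List (Sym2 V)} {l : List V} {ws : List (List (Sym2 V))} :
      IsShortLink H S a b w → LinkChain H S b c l ws → LinkChain H S a c (a :: l) (w :: ws)

namespace LinkChain

variable {S : Finset V} {a b : V} {l : List V} {ws : List (List (Sym2 V))}

lemma mono {T : Finset V} (hST : S ⊆ T) (h : LinkChain H S a b l ws) :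
    LinkChain H T a b l ws := by
  induction h with
  | nil v => exact .nil v
  | cons hw _ ih => exact .cons (hw.mono hST) ih

lemma append {c d : V} {w : List (Sym2 V)} {l' : List V} {ws' : List (List (Sym2 V))}
    (h : LinkChain H S a b l ws) (hw : IsShortLink H S b c w) (h' : LinkChain H S c d l' ws') :
    LinkChain H S a d (l ++ l') (ws ++ w :: ws') := by
  induction h with
  | nil v => exact .cons hw h'
  | cons hw' _ ih => exact .cons hw' (ih hw)

lemma reverse (h : LinkChain H S a b l ws) : LinkChain H S b a l.reverse ws.reverse := by
  induction h with
  | nil v => exact .nil v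
  | cons hw _ ih => simpa using ih.append hw.symm (.nil _)

lemma length_eq (h : LinkChain H S a b l ws) : l.length = ws.length + 1 := by
  induction h with
  | nil v => rfl
  | cons _ _ ih => simp [ih]

lemma start_mem (h : LinkChain H S a b l ws) : a ∈ l := by
  cases h <;> simp

lemma end_mem (h : LinkChain H S a b l ws) : b ∈ l := by
  induction h with
  | nil v => simp
  | cons _ _ ih => exact List.mem_cons_of_mem _ ih

lemma getElem_zero (h : LinkChain H S a b l ws) : l[0]'(by rw [h.length_eq]; omega) = a := by
  cases h <;> rfl

lemma isShortLink_getElem (h : LinkChain H S a b l ws) {i : ℕ} (hi : i + 1 < l.length) :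
    IsShortLink H S l[i] l[i + 1] (ws[i]'(by rw [h.length_eq] at hi; omega)) := by
  induction h generalizing i with
  | nil v => simp at hi
  | cons hw h' ih =>
    cases i with
    | zero => simpa [h'.getElem_zero] using hw
    | succ i => simpa using ih (by simpa using hi)

lemma support (h : LinkChain H S a b l ws) : ∀ p ∈ ws.flatten, ∀ x ∈ p, x ∈ S := by
  induction h with
  | nil v => simp
  | cons hw _ ih =>
    simp only [List.flatten_cons, List.mem_append]
    rintro p (hp | hp)
    exacts [hw.support p hp, ih p hp]

end LinkChain

/-- The closing hop from `w` back to `r` is counted because gluing turns it into part of a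
link (see `IsSkipTour.glue`). -/
structure IsSkipTour (H : SimpleGraph V) (S : Finset V) (r w : V) (l : List V)
    (ws : List (List (Sym2 V))) : Prop where
  chain : LinkChain H S r w l ws
  nodup : l.Nodup
  toFinset_eq : l.toFinset = S
  closing : w = r ∨ H.Adj w r
  count_le : ∀ p, (ws.flatten ++ hop w r).count p ≤ 2

lemma isSkipTour_singleton (r : V) : IsSkipTour H {r} r r [r] [] :=
  ⟨.nil r, List.nodup_singleton r, by simp, Or.inl rfl, by simp [hop]⟩

namespace IsSkipTour

variable {S : Finset V} {r w : V} {l : List V} {ws : List (List (Sym2 V))}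

lemma start_mem (h : IsSkipTour H S r w l ws) : r ∈ S :=
  h.toFinset_eq ▸ List.mem_toFinset.2 h.chain.start_mem

lemma end_mem (h : IsSkipTour H S r w l ws) : w ∈ S :=
  h.toFinset_eq ▸ List.mem_toFinset.2 h.chain.end_mem

lemma support (h : IsSkipTour H S r w l ws) : ∀ p ∈ ws.flatten ++ hop w r, ∀ x ∈ p, x ∈ S := by
  intro p hp x hx
  rcases List.mem_append.1 hp with hp | hp
  · exact h.chain.support p hp x hx
  · rcases mem_of_mem_hop hp hx with rfl | rfl
    exacts [h.end_mem, h.start_mem]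

end IsSkipTour

lemma count_glue_le {A B : Finset V} (hAB : Disjoint A B) {r c : V} (hr : r ∈ A) (hc : c ∈ B)
    {L₁ L₂ : List (Sym2 V)} (hL₁ : ∀ p ∈ L₁, ∀ x ∈ p, x ∈ A) (hL₂ : ∀ p ∈ L₂, ∀ x ∈ p, x ∈ B)
    (h₁ : ∀ p, L₁.count p ≤ 2) (h₂ : ∀ p, L₂.count p ≤ 2) (p : Sym2 V) :
    (L₁ ++ L₂ ++ (hop r c ++ hop c r)).count p ≤ 2 := by
  have hcross : ∀ q ∈ hop r c ++ hop c r, r ∈ q ∧ c ∈ q := by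
    intro q hq
    rcases List.mem_append.1 hq with hq | hq <;> obtain ⟨-, rfl⟩ := mem_hop.1 hq <;> simp
  have hB : ∀ x ∈ A, x ∉ B := fun x hx => disjoint_left.1 hAB hx
  have hp : p.out.1 ∈ p := Sym2.out_fst_mem p
  rw [List.count_append, List.count_append]
  by_cases hpA : ∀ x ∈ p, x ∈ A
  · have h₂' : L₂.count p = 0 :=
      List.count_eq_zero_of_not_mem fun hp' => hB _ (hpA _ hp) (hL₂ p hp' _ hp)
    have h₃ : (hop r c ++ hop c r).count p = 0 :=
      List.count_eq_zero_of_not_mem fun hp' => hB _ (hpA _ (hcross p hp').2) hc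
    linarith [h₁ p]
  by_cases hpB : ∀ x ∈ p, x ∈ B
  · have h₁' : L₁.count p = 0 :=
      List.count_eq_zero_of_not_mem fun hp' => hB _ (hL₁ p hp' _ hp) (hpB _ hp)
    have h₃ : (hop r c ++ hop c r).count p = 0 :=
      List.count_eq_zero_of_not_mem fun hp' => hB _ hr (hpB _ (hcross p hp').1)
    linarith [h₂ p]
  have h₁' : L₁.count p = 0 := List.count_eq_zero_of_not_mem fun hp' => hpA (hL₁ p hp')
  have h₂' : L₂.count p = 0 := List.count_eq_zero_of_not_mem fun hp' => hpB (hL₂ p hp')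
  have h₃ : (hop r c ++ hop c r).count p ≤ 2 := by
    refine List.count_le_length.trans ?_
    simp only [List.length_append]
    linarith [length_hop_le r c, length_hop_le c r]
  omega

lemma IsSkipTour.glue {S C : Finset V} {r c w₁ w₂ : V} {l₁ l₂ : List V}
    {ws₁ ws₂ : List (List (Sym2 V))} (h₁ : IsSkipTour H (S \ C) r w₁ l₁ ws₁)
    (h₂ : IsSkipTour H C c w₂ l₂ ws₂) (hCS : C ⊆ S) (hrc : H.Adj r c) :
    IsSkipTour H S r c (l₁ ++ l₂.reverse)
      (ws₁ ++ (hop w₁ r ++ hop r c ++ hop c w₂) :: ws₂.reverse) where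
  chain := (h₁.chain.mono sdiff_subset).append
    (isShortLink_hop_hop_hop (mem_sdiff.1 h₁.end_mem).1 (mem_sdiff.1 h₁.start_mem).1
      (hCS h₂.start_mem) (hCS h₂.end_mem) h₁.closing hrc (h₂.closing.imp Eq.symm .symm))
    (h₂.chain.reverse.mono hCS)
  nodup := List.nodup_append.2 ⟨h₁.nodup, List.nodup_reverse.2 h₂.nodup,
    fun x hx y hy hxy => by
      rw [← List.mem_toFinset, h₁.toFinset_eq] at hx
      rw [List.mem_reverse, ← List.mem_toFinset, h₂.toFinset_eq] at hy
      exact (mem_sdiff.1 hx).2 (hxy ▸ hy)⟩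
  toFinset_eq := by
    rw [List.toFinset_append, List.toFinset_reverse, h₁.toFinset_eq, h₂.toFinset_eq,
      sdiff_union_of_subset hCS]
  closing := Or.inr hrc.symm
  count_le p := by
    have hs₂ := h₂.support
    have hc₂ := h₂.count_le
    rw [hop_comm] at hs₂ hc₂
    have := count_glue_le sdiff_disjoint h₁.start_mem h₂.start_mem h₁.support hs₂
      h₁.count_le hc₂ p
    simp only [List.flatten_append, List.flatten_cons, List.count_append, List.count_flatten,
      List.map_reverse, List.sum_reverse] at this ⊢
    omega

theorem exists_isSkipTour {S : Finset V} (hS : ConnectedOn H S) {r : V} (hr : r ∈ S) :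
    ∃ w l ws, IsSkipTour H S r w l ws := by
  classical
  induction S using Finset.strongInduction generalizing r with | H S ih => ?_
  by_cases hSr : S = {r}
  · subst hSr
    exact ⟨r, [r], [], isSkipTour_singleton r⟩
  obtain ⟨x, hxS, hxr⟩ : ∃ x ∈ S, x ≠ r := by
    by_contra! h
    exact hSr (eq_singleton_iff_unique_mem.2 ⟨hr, h⟩)
  obtain ⟨c, hcS, hrc⟩ := hS.exists_adj hr hxS hxr
  set C := (S.erase r).filter (ReflTransGen (AdjIn H (S.erase r)) c)
  have hcC : c ∈ C := mem_filter.2 ⟨mem_erase.2 ⟨hrc.ne.symm, hcS⟩, .refl⟩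
  have hCS : C ⊆ S := (filter_subset _ _).trans (erase_subset r S)
  have hrC : r ∉ C := fun h => (mem_erase.1 (mem_filter.1 h).1).1 rfl
  have hC : ∀ a ∈ C, ∀ b ∈ S, b ≠ r → H.Adj a b → b ∈ C := by
    intro a ha b hb hbr hab
    obtain ⟨haS, hca⟩ := mem_filter.1 ha
    have hbS : b ∈ S.erase r := mem_erase.2 ⟨hbr, hb⟩
    exact mem_filter.2 ⟨hbS, hca.tail ⟨haS, hbS, hab⟩⟩
  obtain ⟨w₁, l₁, ws₁, h₁⟩ := ih (S \ C) (sdiff_ssubset hCS ⟨c, hcC⟩)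
    (hS.sdiff hr hC) (mem_sdiff.2 ⟨hr, hrC⟩)
  obtain ⟨w₂, l₂, ws₂, h₂⟩ := ih C (hCS.ssubset_of_not_subset fun h => hrC (h hr))
    (connectedOn_filter_reflTransGen _ c) hcC
  exact ⟨_, _, _, h₁.glue h₂ hCS hrc⟩

theorem exists_equiv_isShortLink [Fintype V] (hH : H.Connected) {n : ℕ}
    (hn : Fintype.card V = n) :
    ∃ (σ : Fin n ≃ V) (W : Fin (n - 1) → List (Sym2 V)),
      (∀ (i : Fin (n - 1)) (a b : Fin n), (a : ℕ) = i → (b : ℕ) = i + 1 →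
        IsShortLink H univ (σ a) (σ b) (W i)) ∧
      ∀ p, ∑ i, (W i).count p ≤ 2 := by
  obtain ⟨r⟩ := hH.nonempty
  obtain ⟨w, l, ws, h⟩ := exists_isSkipTour (connectedOn_univ hH) (mem_univ r)
  have hl : l.length = n := by
    rw [← hn, ← List.toFinset_card_of_nodup h.nodup, h.toFinset_eq, card_univ]
  have hws : ws.length = n - 1 := by
    have := h.chain.length_eq
    omega
  have hall : ∀ v, v ∈ l := fun v => List.mem_toFinset.1 (h.toFinset_eq ▸ mem_univ v)
  refine ⟨(finCongr hl.symm).trans (List.Nodup.getEquivOfForallMemList l h.nodup hall),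
    fun i => ws[(i : ℕ)], fun i a b ha hb => ?_, fun p => ?_⟩
  · obtain ⟨a, _⟩ := a
    obtain ⟨b, _⟩ := b
    dsimp only at ha hb
    subst ha hb
    simpa using h.chain.isShortLink_getElem (i := i) (by omega)
  · calc ∑ i : Fin (n - 1), (ws[(i : ℕ)]).count p
          = ∑ i : Fin ws.length, (ws[(i : ℕ)]).count p :=
          Fintype.sum_equiv (finCongr hws.symm) _ _ fun _ => rfl
      _ = ws.flatten.count p := by rw [Fin.sum_univ_fun_getElem, List.count_flatten]
      _ ≤ (ws.flatten ++ hop w r).count p := by rw [List.count_append]; omega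
      _ ≤ 2 := h.count_le p

end

section

variable {ι E : Type*} [DecidableEq E]

def countMatrix (R : ι → List E) : Matrix ι E (ZMod 2) := of fun i e => ((R i).count e : ZMod 2)

lemma sum_count_mul_eq_sum_map [Fintype E] (L : List E) (G : Matrix E V (ZMod 2)) (v : V) :
    ∑ e, (L.count e : ZMod 2) * G e v = (L.map G).sum v := by
  induction L with
  | nil => exact sum_eq_zero fun e _ => by simp
  | cons x L ih =>
    simp only [List.count_cons, beq_iff_eq, Nat.cast_add, Nat.cast_ite, Nat.cast_one,
      Nat.cast_zero, add_mul, ite_mul, one_mul, zero_mul, Finset.sum_add_distrib, ih,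
      Finset.sum_ite_eq, mem_univ, if_true]
    exact add_comm _ _

lemma countMatrix_mul_apply [Fintype E] (R : ι → List E) (G : Matrix E V (ZMod 2)) (i : ι) :
    (countMatrix R * G) i = ((R i).map G).sum :=
  funext fun v => sum_count_mul_eq_sum_map (R i) G v

lemma hwt_natCast_le_sum [Fintype ι] (c : ι → ℕ) : hwt (fun i => (c i : ZMod 2)) ≤ ∑ i, c i := by
  have hsub : univ.filter (fun i => (c i : ZMod 2) ≠ 0) ⊆ univ.filter (fun i => c i ≠ 0) :=
    fun i => by
      simp only [mem_filter, mem_univ, true_and]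
      exact fun hi hc => hi (by rw [hc, Nat.cast_zero])
  calc hwt (fun i => (c i : ZMod 2)) ≤ (univ.filter fun i => c i ≠ 0).card := card_le_card hsub
    _ ≤ ∑ i ∈ univ.filter (fun i => c i ≠ 0), c i := by
        simpa using card_nsmul_le_sum _ c 1 fun i hi => Nat.one_le_iff_ne_zero.2 (mem_filter.1 hi).2
    _ ≤ ∑ i, c i := sum_le_sum_of_subset (filter_subset _ _)

lemma sparse_countMatrix [Fintype ι] [Fintype E] {R : ι → List E} {r c : ℕ}
    (hr : ∀ i, (R i).length ≤ r) (hc : ∀ e, ∑ i, (R i).count e ≤ c) :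
    Sparse (countMatrix R) r c := by
  refine ⟨fun i => le_trans ?_ (hr i), fun e => (hwt_natCast_le_sum _).trans (hc e)⟩
  have hsub : univ.filter (fun e => countMatrix R i e ≠ 0) ⊆ (R i).toFinset := fun e he =>
    List.mem_toFinset.2 (List.count_pos_iff.1 (Nat.pos_of_ne_zero fun h0 =>
      (mem_filter.1 he).2 (by simp [countMatrix, h0])))
  exact (card_le_card hsub).trans (List.toFinset_card_le _)

end

lemma isPermMatrix_toMatrix {n : ℕ} (τ : Equiv.Perm (Fin n)) :
    IsPermMatrix τ.toPEquiv.toMatrix :=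
  ⟨τ, fun i j => by simp [PEquiv.toMatrix_apply]⟩

lemma HR_apply {n : ℕ} (i : Fin (n - 1)) {a b : Fin n} (ha : (a : ℕ) = i) (hb : (b : ℕ) = i + 1)
    (j : Fin n) : HR n i j = edgeVec s(a, b) j := by
  simp only [HR, of_apply, edgeVec_mk, Fin.ext_iff, ha, hb]
  split_ifs <;> first | rfl | omega

lemma eq_edgeVec_of_hwt_eq_two [Fintype V] [DecidableEq V] {f : V → ZMod 2} (hf : hwt f = 2)
    {x y : V} (hxy : x ≠ y) (hx : f x ≠ 0) (hy : f y ≠ 0) : f = edgeVec s(x, y) := by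
  have hsupp : univ.filter (fun v => f v ≠ 0) = {x, y} :=
    (eq_of_subset_of_card_le (by simp [insert_subset_iff, hx, hy])
      (by rw [card_pair hxy]; exact hf.le)).symm
  have hone : ∀ a : ZMod 2, a ≠ 0 → a = 1 := by decide
  funext v
  have hv := congrArg (v ∈ ·) hsupp
  simp only [mem_filter, mem_univ, true_and, mem_insert, mem_singleton, eq_iff_iff] at hv
  rw [edgeVec_mk]
  by_cases hvx : v = x <;> by_cases hvy : v = y <;> simp_all

end SkipTree

open SkipTree

variable {m n : ℕ} {G : Matrix (Fin m) (Fin n) (ZMod 2)}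

lemma IsIncidence.exists_eq_edgeVec (hinc : IsIncidence G) {p : Sym2 (Fin n)}
    (hp : p ∈ (incGraph G).edgeSet) : ∃ e, G e = edgeVec p := by
  induction p using Sym2.ind with | _ x y => ?_
  rw [SimpleGraph.mem_edgeSet, incGraph, SimpleGraph.fromRel_adj] at hp
  obtain ⟨hxy, ⟨e, hx, hy⟩ | ⟨e, hy, hx⟩⟩ := hp
  all_goals exact ⟨e, eq_edgeVec_of_hwt_eq_two (hinc e) hxy hx hy⟩

/-- One row of `G` is chosen per edge, so parallel rows do not split the multiplicities. -/
lemma IsIncidence.exists_rows {ι : Type*} [Fintype ι] (hinc : IsIncidence G)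
    (W : ι → List (Sym2 (Fin n))) (hW : ∀ i, ∀ p ∈ W i, p ∈ (incGraph G).edgeSet) {k : ℕ}
    (hk : ∀ p, ∑ i, (W i).count p ≤ k) :
    ∃ R : ι → List (Fin m), (∀ i, (R i).map G = (W i).map edgeVec) ∧
      ∀ e, ∑ i, (R i).count e ≤ k := by
  choose row hrow using fun p : (incGraph G).edgeSet => hinc.exists_eq_edgeVec p.2
  have hinj : Function.Injective row := fun p q h => Subtype.ext <|
    edgeVec_injOn ((incGraph G).not_isDiag_of_mem_edgeSet p.2)
      ((incGraph G).not_isDiag_of_mem_edgeSet q.2) (by rw [← hrow, ← hrow, h])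
  refine ⟨fun i => ((W i).attachWith _ (hW i)).map row, fun i => ?_, fun e => ?_⟩
  · change List.map (fun e => G e) (List.map row _) = _
    rw [List.map_map, List.map_subtype (g := edgeVec) fun p hp => hrow ⟨p, hp⟩,
      List.unattach_attachWith]
  by_cases he : ∃ q, row q = e
  · obtain ⟨q, rfl⟩ := he
    simpa only [List.count_map_of_injective _ _ hinj, List.count_attachWith] using hk q
  · simp only [not_exists] at he
    simp [List.count_eq_zero_of_not_mem, he]

/-- For any connected graph with incidence matrix `G ∈ F₂^{m×n}`, there
exist a `(3,2)`-sparse matrix `T' ∈ F₂^{(n−1)×m}` and a permutation matrix `P'` with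
`T'·G·P' = H_R`. -/
theorem skipTree_fullRank {n m : ℕ} (G : Matrix (Fin m) (Fin n) (ZMod 2))
    (hinc : IsIncidence G) (hconn : (incGraph G).Connected) :
    ∃ (T' : Matrix (Fin (n - 1)) (Fin m) (ZMod 2)) (P' : Matrix (Fin n) (Fin n) (ZMod 2)),
      Sparse T' 3 2 ∧ IsPermMatrix P' ∧ T' * G * P' = HR n := by
  obtain ⟨σ, W, hW, hcount⟩ := exists_equiv_isShortLink hconn (Fintype.card_fin n)
  have hlink : ∀ i : Fin (n - 1),
      IsShortLink (incGraph G) univ (σ ⟨i, by omega⟩) (σ ⟨i + 1, by omega⟩) (W i) :=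
    fun i => hW i _ _ rfl rfl
  obtain ⟨R, hR, hRcount⟩ := hinc.exists_rows W (fun i => (hlink i).edge) hcount
  refine ⟨countMatrix R, σ.symm.toPEquiv.toMatrix,
    sparse_countMatrix (fun i => ?_) hRcount, isPermMatrix_toMatrix _, ?_⟩
  · rw [← List.length_map (f := G), hR i, List.length_map]
    exact (hlink i).length_le
  ext i j
  rw [PEquiv.mul_toMatrix_toPEquiv, submatrix_apply, Equiv.symm_symm, id, countMatrix_mul_apply,
    hR, (hlink i).sum_edgeVec, edgeVec_mk_apply_of_injective σ.injective]
  exact (HR_apply i rfl rfl j).symm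
end

section
/- For any connected graph G, the cube graph G³ has a Hamiltonian cycle. (The SkipTree labeling provides a constructive proof: the ordering of vertices by SkipTree label forms a Hamiltonian cycle in G³.) -/
/-!
Fix a breadth-first spanning tree of `G` rooted at `r` and traverse it recursively: the tour
of `v` is `v` followed, child by child, by the reversed tours of the children of `v`. By
induction every tour moves in steps of length at most `3`, starts within distance `2` of its
root and ends within distance `1` of it: a reversed child tour starts within `1` of the child
`c`, hence within `2` of `v`, and ends at `c`, next to `v`, so consecutive blocks are joined by
steps of length at most `1 + 2`. The tour of `r` lists each vertex once and ends next to `r`,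
so it closes up to a Hamiltonian cycle of `G³`.
-/

/-- The cube `G³` of a graph `G`: same vertex set, with two distinct vertices adjacent iff
their distance in `G` is at most `3`. -/
def cubeGraph {V : Type*} (G : SimpleGraph V) : SimpleGraph V where
  Adj u v := u ≠ v ∧ G.Reachable u v ∧ G.dist u v ≤ 3
  symm := by
    constructor
    intro u v ⟨h1, h2, h3⟩
    exact ⟨h1.symm, h2.symm, by rwa [SimpleGraph.dist_comm]⟩
  loopless := ⟨fun v h => h.1 rfl⟩

lemma List.Nodup.length_eq_card {α : Type*} [Fintype α] [DecidableEq α] {l : List α}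
    (hnodup : l.Nodup) (hmem : ∀ a, a ∈ l) : l.length = Fintype.card α :=
  (Fintype.card_fin _).symm.trans (Fintype.card_congr (hnodup.getEquivOfForallMemList l hmem))

namespace SimpleGraph

variable {V : Type*}

lemma dist_lt_card [Fintype V] (G : SimpleGraph V) (u v : V) : G.dist u v < Fintype.card V := by
  by_cases h : G.Reachable u v
  · obtain ⟨p, hp, hlen⟩ := h.exists_path_of_dist
    exact hlen ▸ hp.length_lt
  · rw [dist_eq_zero_of_not_reachable h]
    exact Fintype.card_pos_iff.2 ⟨u⟩

lemma Connected.exists_adj_dist_add_one_eq {G : SimpleGraph V} (hconn : G.Connected) {r v : V}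
    (hv : v ≠ r) : ∃ w, G.Adj v w ∧ G.dist r w + 1 = G.dist r v := by
  obtain ⟨p, hp⟩ := hconn.exists_walk_length_eq_dist v r
  have hnil : ¬p.Nil := Walk.not_nil_of_ne hv
  refine ⟨p.snd, p.adj_snd hnil, ?_⟩
  have hupper : G.dist p.snd r ≤ p.tail.length := dist_le p.tail
  have hlower : G.dist v r ≤ G.dist v p.snd + G.dist p.snd r := hconn.dist_triangle
  have hpos : 0 < G.dist v r := hconn.pos_dist_of_ne hv
  rw [dist_eq_one_iff_adj.2 (p.adj_snd hnil)] at hlower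
  rw [← p.length_tail_add_one hnil] at hp
  rw [dist_comm, G.dist_comm (u := r)]
  omega

lemma exists_isHamiltonianCycle_of_isChain [Fintype V] [DecidableEq V] {G : SimpleGraph V}
    {l : List V} (hne : l ≠ []) (hchain : l.IsChain G.Adj) (hnodup : l.Nodup)
    (hmem : ∀ v, v ∈ l) (hcard : 3 ≤ Fintype.card V)
    (hclose : G.Adj (l.getLast hne) (l.head hne)) :
    ∃ (v : V) (p : G.Walk v v), p.IsHamiltonianCycle := by
  have hlen := hnodup.length_eq_card hmem
  refine ⟨_, .cons hclose (.ofSupport l hne hchain), ?_⟩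
  rw [Walk.isHamiltonianCycle_iff_isCycle_and_length_eq,
    Walk.isCycle_iff_isPath_tail_and_le_length]
  simp only [Walk.tail_cons, Walk.length_cons, Walk.length_ofSupport]
  exact ⟨⟨Walk.IsPath.mk' (by simpa using hnodup), by omega⟩, by omega⟩

lemma isChain_cubeGraph_adj {G : SimpleGraph V} (hconn : G.Connected) {l : List V}
    (hnodup : l.Nodup) (hl : l.IsChain (fun a b => G.dist a b ≤ 3)) :
    l.IsChain (cubeGraph G).Adj := by
  rw [List.isChain_iff_getElem] at hl ⊢
  exact fun i hi =>
    ⟨fun h => by simpa using hnodup.getElem_inj_iff.1 h, hconn.preconnected _ _, hl i hi⟩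

def IsCubeChainAround (G : SimpleGraph V) (v : V) (l : List V) : Prop :=
  l.IsChain (fun a b => G.dist a b ≤ 3) ∧ (∀ x ∈ l.head?, G.dist v x ≤ 2) ∧
    ∀ x ∈ l.getLast?, G.dist v x ≤ 1

namespace IsCubeChainAround

variable {G : SimpleGraph V} {v : V}

lemma append (hconn : G.Connected) {l₁ l₂ : List V} (h₁ : G.IsCubeChainAround v l₁)
    (h₂ : G.IsCubeChainAround v l₂) : G.IsCubeChainAround v (l₁ ++ l₂) := by
  obtain ⟨hchain₁, hhead₁, hlast₁⟩ := h₁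
  obtain ⟨hchain₂, hhead₂, hlast₂⟩ := h₂
  refine ⟨hchain₁.append hchain₂ fun x hx y hy => ?_, fun x hx => ?_, fun x hx => ?_⟩
  · have := hlast₁ x hx
    have := hhead₂ y hy
    calc G.dist x y ≤ G.dist x v + G.dist v y := hconn.dist_triangle
      _ ≤ 3 := by rw [dist_comm]; omega
  · rw [List.head?_append, Option.mem_def, Option.or_eq_some_iff] at hx
    rcases hx with hx | ⟨-, hx⟩
    exacts [hhead₁ x hx, hhead₂ x hx]
  · rw [List.getLast?_append, Option.mem_def, Option.or_eq_some_iff] at hx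
    rcases hx with hx | ⟨-, hx⟩
    exacts [hlast₂ x hx, hlast₁ x hx]

lemma flatten (hconn : G.Connected) {L : List (List V)}
    (h : ∀ l ∈ L, G.IsCubeChainAround v l) : G.IsCubeChainAround v L.flatten := by
  induction L with
  | nil => exact ⟨.nil, by simp, by simp⟩
  | cons l L ih =>
    exact (h l List.mem_cons_self).append hconn (ih fun l' hl' => h l' (List.mem_cons_of_mem l hl'))

lemma cons_self {l : List V} (h : G.IsCubeChainAround v l) : G.IsCubeChainAround v (v :: l) := by
  obtain ⟨hchain, hhead, hlast⟩ := h
  refine ⟨hchain.cons fun x hx => (hhead x hx).trans (by omega), by simp, fun x hx => ?_⟩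
  rw [List.getLast?_cons, Option.mem_some_iff] at hx
  cases hl : l.getLast? with
  | none => simp [hl, ← hx]
  | some y => simpa [hl, ← hx] using hlast y hl

lemma reverse_of_adj (hconn : G.Connected) {c : V} {l : List V}
    (h : G.IsCubeChainAround c (c :: l)) (hadj : G.Adj v c) :
    G.IsCubeChainAround v (c :: l).reverse := by
  obtain ⟨hchain, -, hlast⟩ := h
  have hvc : G.dist v c = 1 := dist_eq_one_iff_adj.2 hadj
  refine ⟨List.isChain_reverse.2 (hchain.imp fun a b hab => ?_), fun x hx => ?_, fun x hx => ?_⟩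
  · rwa [dist_comm]
  · rw [List.head?_reverse] at hx
    have := hlast x hx
    calc G.dist v x ≤ G.dist v c + G.dist c x := hconn.dist_triangle
      _ ≤ 2 := by omega
  · rw [List.getLast?_reverse, List.head?_cons, Option.mem_some_iff] at hx
    exact hx ▸ hvc.le

end IsCubeChainAround

structure BFSTree (G : SimpleGraph V) (r : V) where
  parent : V → V
  adj_parent {v : V} : v ≠ r → G.Adj v (parent v)
  dist_parent {v : V} : v ≠ r → G.dist r (parent v) + 1 = G.dist r v

lemma Connected.nonempty_bfsTree {G : SimpleGraph V} (hconn : G.Connected) (r : V) :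
    Nonempty (G.BFSTree r) := by
  choose! parent hadj hdist using fun v (hv : v ≠ r) => hconn.exists_adj_dist_add_one_eq hv
  exact ⟨⟨parent, hadj _, hdist _⟩⟩

namespace BFSTree

variable {G : SimpleGraph V} {r : V}

lemma reachable (T : G.BFSTree r) (v : V) : G.Reachable r v := by
  by_cases hv : v = r
  · exact hv ▸ Reachable.refl (G := G) r
  · exact Reachable.of_dist_ne_zero (by have := T.dist_parent hv; omega)

lemma connected (T : G.BFSTree r) : G.Connected :=
  (connected_iff_exists_forall_reachable G).2 ⟨r, T.reachable⟩

variable [Fintype V] [DecidableEq V] (T : G.BFSTree r)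

def children (v : V) : Finset V := {c | c ≠ r ∧ T.parent c = v}

lemma mem_children {v c : V} : c ∈ T.children v ↔ c ≠ r ∧ T.parent c = v := by
  simp [children]

variable {T} in
lemma dist_of_mem_children {v c : V} (hc : c ∈ T.children v) : G.dist r c = G.dist r v + 1 := by
  obtain ⟨hcr, rfl⟩ := T.mem_children.1 hc
  exact (T.dist_parent hcr).symm

lemma induction_on_children {P : V → Prop} (h : ∀ v, (∀ c ∈ T.children v, P c) → P v)
    (v : V) : P v := by
  induction hn : Fintype.card V - G.dist r v using Nat.strong_induction_on generalizing v with
  | _ n ih =>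
    refine h v fun c hc => ih _ ?_ c rfl
    have := dist_of_mem_children hc
    have := G.dist_lt_card r c
    omega

noncomputable def tour (v : V) : List V :=
  v :: (T.children v).toList.attach.flatMap fun c => (tour c.1).reverse
termination_by Fintype.card V - G.dist r v
decreasing_by
  have := dist_of_mem_children (Finset.mem_toList.1 c.2)
  have := G.dist_lt_card r c
  omega

lemma tour_eq (v : V) :
    T.tour v = v :: (T.children v).toList.flatMap fun c => (T.tour c).reverse := by
  rw [tour.eq_1]; simp only [List.flatMap_subtype, List.unattach_attach]

lemma mem_children_parent {c : V} (hc : c ≠ r) : c ∈ T.children (T.parent c) :=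
  T.mem_children.2 ⟨hc, rfl⟩

lemma mem_tour_iff {u v : V} :
    u ∈ T.tour v ↔ u = v ∨ ∃ c ∈ T.children v, u ∈ T.tour c := by
  rw [tour_eq]
  simp only [List.mem_cons, List.mem_flatMap, Finset.mem_toList, List.mem_reverse]

lemma mem_tour_root (u : V) : u ∈ T.tour r := by
  suffices ∀ n w, G.dist r w = n → u ∈ T.tour w → u ∈ T.tour r from
    this _ u rfl (T.mem_tour_iff.2 (.inl rfl))
  intro n
  induction n with
  | zero =>
    intro w hw hu
    rwa [← T.connected.dist_eq_zero_iff.1 hw] at hu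
  | succ n ih =>
    intro w hw hu
    have hwr : w ≠ r := by rintro rfl; simp at hw
    exact ih (T.parent w) (by have := T.dist_parent hwr; omega)
      (T.mem_tour_iff.2 (.inr ⟨w, T.mem_children_parent hwr, hu⟩))

lemma parent_iterate_of_mem_tour {u v : V} (hu : u ∈ T.tour v) :
    G.dist r v ≤ G.dist r u ∧ T.parent^[G.dist r u - G.dist r v] u = v := by
  induction v using T.induction_on_children generalizing u with
  | h v ih =>
    rcases T.mem_tour_iff.1 hu with rfl | ⟨c, hc, hu⟩
    · simp
    · obtain ⟨hle, hiter⟩ := ih c hc hu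
      have hdist := dist_of_mem_children hc
      refine ⟨by omega, ?_⟩
      rw [show G.dist r u - G.dist r v = G.dist r u - G.dist r c + 1 by omega,
        Function.iterate_succ_apply', hiter, (T.mem_children.1 hc).2]

lemma nodup_tour (v : V) : (T.tour v).Nodup := by
  induction v using T.induction_on_children with
  | h v ih =>
    rw [tour_eq, List.nodup_cons, List.nodup_flatMap]
    refine ⟨fun hv => ?_, fun c hc => List.nodup_reverse.2 (ih c (Finset.mem_toList.1 hc)), ?_⟩
    · obtain ⟨c, hc, hv⟩ := List.mem_flatMap.1 hv
      have := (T.parent_iterate_of_mem_tour (List.mem_reverse.1 hv)).1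
      have := dist_of_mem_children (Finset.mem_toList.1 hc)
      omega
    · refine (Finset.nodup_toList _).imp_of_mem fun hc hc' hne => ?_
      refine List.disjoint_left.2 fun u hu hu' => hne ?_
      have h := (T.parent_iterate_of_mem_tour (List.mem_reverse.1 hu)).2
      have h' := (T.parent_iterate_of_mem_tour (List.mem_reverse.1 hu')).2
      rw [dist_of_mem_children (Finset.mem_toList.1 hc)] at h
      rw [dist_of_mem_children (Finset.mem_toList.1 hc')] at h'
      rw [← h, ← h']

lemma isCubeChainAround_tour (v : V) : G.IsCubeChainAround v (T.tour v) := by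
  induction v using T.induction_on_children with
  | h v ih =>
    rw [tour_eq, List.flatMap_def]
    refine .cons_self (.flatten T.connected fun l hl => ?_)
    obtain ⟨c, hc, rfl⟩ := List.mem_map.1 hl
    have hc := Finset.mem_toList.1 hc
    obtain ⟨hcr, rfl⟩ := T.mem_children.1 hc
    have hchild := ih c hc
    rw [tour_eq] at hchild ⊢
    exact .reverse_of_adj T.connected hchild (T.adj_parent hcr).symm

end BFSTree

end SimpleGraph

/-- For any connected graph `G` (on at least three vertices, so that a
cycle can exist), the cube graph `G³` has a Hamiltonian cycle. -/
theorem cube_hamiltonian {V : Type*} [Fintype V] [DecidableEq V]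
    (G : SimpleGraph V) (hconn : G.Connected) (hcard : 3 ≤ Fintype.card V) :
    ∃ (v : V) (p : (cubeGraph G).Walk v v), p.IsHamiltonianCycle := by
  obtain ⟨r⟩ : Nonempty V := Fintype.card_pos_iff.1 (by omega)
  obtain ⟨T⟩ := hconn.nonempty_bfsTree r
  obtain ⟨hchain, -, hlast⟩ := T.isCubeChainAround_tour r
  have hnodup := T.nodup_tour r
  have hne : T.tour r ≠ [] := List.ne_nil_of_mem (T.mem_tour_root r)
  have hhead : (T.tour r).head hne = r := by simp [T.tour_eq r]
  have hlen := hnodup.length_eq_card T.mem_tour_root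
  refine SimpleGraph.exists_isHamiltonianCycle_of_isChain hne
    (SimpleGraph.isChain_cubeGraph_adj hconn hnodup hchain) hnodup T.mem_tour_root hcard
    ⟨fun h => ?_, hconn.preconnected _ _, ?_⟩
  · obtain ⟨x, hx⟩ := (hnodup.head_eq_getLast_iff hne).1 h.symm
    rw [hx, List.length_singleton] at hlen
    omega
  · rw [hhead, SimpleGraph.dist_comm]
    exact (hlast _ (List.getLast?_eq_some_getLast hne)).trans (by norm_num)
end

section
/- Let G_l = (V_l, E_l) and G_r = (V_r, E_r) be graphs with relative expansions β_{t_l}(G_l, P_l) ≥ 1 and β_{t_r}(G_r, P_r) ≥ 1 for vertex subsets P_l ⊆ V_l and P_r ⊆ V_r. Let P*_l ⊆ P_l and P*_r ⊆ P_r be equal-sized subsets, and let A be an adapter: a perfect matching of edges between P*_l and P*_r given by a bijection a : P*_l → P*_r. Then the adapted graph G = (V_l ∪ V_r, E_l ∪ E_r ∪ A) satisfies β_t(G, P_l ∪ P_r) ≥ 1 for t = min(t_l, t_r, |A|). -/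
open Matrix Finset

/-- Weight of the restriction of `v` to `U`. -/
def hwtOn {V : Type*} (v : V → ZMod 2) (U : Finset V) : ℕ :=
  (U.filter fun i => v i ≠ 0).card

/-- The relative-expansion property `β_t(G, U) ≥ 1`:
`|v Gᵀ| ≥ min(t, |u|, |U| − |u|)` for all vertex subsets `v`, where `u` is the
restriction of `v` to `U` and `G` is the incidence matrix. -/
def ExpGE1 {E V : Type*} [Fintype E] [Fintype V] (G : Matrix E V (ZMod 2))
    (U : Finset V) (t : ℕ) : Prop :=
  ∀ v : V → ZMod 2,
    min t (min (hwtOn v U) (U.card - hwtOn v U)) ≤ hwt (G.mulVec v)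

variable {El Er Vl Vr : Type*} [Fintype El] [Fintype Er] [Fintype Vl] [Fintype Vr]
  [DecidableEq Vl] [DecidableEq Vr]

/-- The incidence matrix of the adapted graph `G_l ∼_A G_r`: the edges are
`E_l ⊕ A ⊕ E_r`, where the adapter edge indexed by `s ∈ P*_l` joins vertex `s` of the
left graph to vertex `a s` of the right graph. -/
def adaptedIncidence (Gl : Matrix El Vl (ZMod 2)) (Gr : Matrix Er Vr (ZMod 2))
    (Pls : Finset Vl) (Prs : Finset Vr) (a : {x // x ∈ Pls} ≃ {y // y ∈ Prs}) :
    Matrix (El ⊕ {x // x ∈ Pls} ⊕ Er) (Vl ⊕ Vr) (ZMod 2) :=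
  Matrix.of fun e w =>
    match e, w with
    | Sum.inl e, Sum.inl j => Gl e j
    | Sum.inl _, Sum.inr _ => 0
    | Sum.inr (Sum.inl s), Sum.inl j => if j = (s : Vl) then 1 else 0
    | Sum.inr (Sum.inl s), Sum.inr j => if j = ((a s : {y // y ∈ Prs}) : Vr) then 1 else 0
    | Sum.inr (Sum.inr _), Sum.inl _ => 0
    | Sum.inr (Sum.inr e), Sum.inr j => Gr e j

lemma hwt_sum_split {α β : Type*} [Fintype α] [Fintype β] (f : α ⊕ β → ZMod 2) :
    hwt f = hwt (fun e => f (Sum.inl e)) + hwt (fun e => f (Sum.inr e)) := by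
  unfold hwt
  simp only [Finset.card_filter]
  rw [Fintype.sum_sum_type]

lemma subtype_filter_card {α : Type*} [DecidableEq α] (s : Finset α) (p : α → Prop)
    [DecidablePred p] :
    ((univ : Finset {x // x ∈ s}).filter fun x : {x // x ∈ s} => p ↑x).card
      = (s.filter p).card := by
  rw [← Finset.card_image_of_injective
    ((univ : Finset {x // x ∈ s}).filter fun x : {x // x ∈ s} => p ↑x) Subtype.val_injective]
  congr 1; ext x; simp [Finset.mem_filter]; aesop

lemma equiv_filter_card {α β : Type*} [Fintype α] [Fintype β] [DecidableEq β] (a : α ≃ β)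
    (q : β → Prop) [DecidablePred q] :
    ((univ : Finset α).filter fun x => q (a x)).card = (univ.filter q).card := by
  rw [← Finset.card_image_of_injective ((univ : Finset α).filter fun x => q (a x)) a.injective]
  congr 1; ext y
  simp only [Finset.mem_image, Finset.mem_filter, Finset.mem_univ, true_and]
  exact ⟨fun ⟨x, hx, e⟩ => e ▸ hx, fun h => ⟨a.symm y, by simpa using h, a.apply_symm_apply y⟩⟩

/-- **adapter preserves relative expansion.** If
`β_{t_l}(G_l, P_l) ≥ 1` and `β_{t_r}(G_r, P_r) ≥ 1`, then joining the graphs by an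
adapter `A` (a perfect matching between equal-sized subsets `P*_l ⊆ P_l`, `P*_r ⊆ P_r`
given by a bijection) yields an adapted graph with
`β_t(G, P_l ∪ P_r) ≥ 1` for `t = min(t_l, t_r, |A|)`. -/
theorem adapted_expansion (Gl : Matrix El Vl (ZMod 2)) (Gr : Matrix Er Vr (ZMod 2))
    (Pl : Finset Vl) (Pr : Finset Vr) (tl tr : ℕ)
    (hl : ExpGE1 Gl Pl tl) (hr : ExpGE1 Gr Pr tr)
    (Pls : Finset Vl) (Prs : Finset Vr) (hPls : Pls ⊆ Pl) (hPrs : Prs ⊆ Pr)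
    (a : {x // x ∈ Pls} ≃ {y // y ∈ Prs}) :
    ExpGE1 (adaptedIncidence Gl Gr Pls Prs a)
      ((Pl.image Sum.inl ∪ Pr.image Sum.inr : Finset (Vl ⊕ Vr)))
      (min tl (min tr Pls.card)) := by
  intro v
  set vl : Vl → ZMod 2 := fun j => v (Sum.inl j) with hvl
  set vr : Vr → ZMod 2 := fun j => v (Sum.inr j) with hvr
  -- disjointness of the two images
  have hdisj : Disjoint (Pl.image (Sum.inl : Vl → Vl ⊕ Vr)) (Pr.image Sum.inr) := by
    simp [Finset.disjoint_left]
  -- cardinality of the union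
  have hUcard : ((Pl.image Sum.inl ∪ Pr.image Sum.inr : Finset (Vl ⊕ Vr))).card
      = Pl.card + Pr.card := by
    rw [Finset.card_union_of_disjoint hdisj,
      Finset.card_image_of_injective _ Sum.inl_injective,
      Finset.card_image_of_injective _ Sum.inr_injective]
  -- split of hwtOn over the union
  have hwtOn_split : hwtOn v (Pl.image Sum.inl ∪ Pr.image Sum.inr)
      = hwtOn vl Pl + hwtOn vr Pr := by
    unfold hwtOn
    rw [Finset.filter_union,
      Finset.card_union_of_disjoint (Finset.disjoint_filter_filter hdisj),
      Finset.filter_image, Finset.filter_image,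
      Finset.card_image_of_injective _ Sum.inl_injective,
      Finset.card_image_of_injective _ Sum.inr_injective]
  -- split of the output weight
  set A : ℕ := ((univ : Finset {x // x ∈ Pls}).filter
      fun s : {x // x ∈ Pls} => vl ↑s + vr ↑(a s) ≠ 0).card with hA
  have h1 : (fun e => (adaptedIncidence Gl Gr Pls Prs a).mulVec v (Sum.inl e))
      = Gl.mulVec vl := by
    funext e
    simp [adaptedIncidence, Matrix.mulVec, dotProduct, Fintype.sum_sum_type, hvl]
  have h2 : (fun e => (adaptedIncidence Gl Gr Pls Prs a).mulVec v (Sum.inr (Sum.inr e)))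
      = Gr.mulVec vr := by
    funext e
    simp [adaptedIncidence, Matrix.mulVec, dotProduct, Fintype.sum_sum_type, hvr]
  have h3 : ∀ s : {x // x ∈ Pls},
      (adaptedIncidence Gl Gr Pls Prs a).mulVec v (Sum.inr (Sum.inl s)) = vl ↑s + vr ↑(a s) := by
    intro s
    simp [adaptedIncidence, Matrix.mulVec, dotProduct, Fintype.sum_sum_type, ite_mul,
      Finset.sum_ite_eq', hvl, hvr]
  have hout : hwt ((adaptedIncidence Gl Gr Pls Prs a).mulVec v)
      = hwt (Gl.mulVec vl) + (A + hwt (Gr.mulVec vr)) := by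
    rw [hwt_sum_split, hwt_sum_split (fun e => _), h1, h2]
    congr 2
    unfold hwt
    congr 1
    ext s
    simp [h3 s]
  -- quantities
  set ul := hwtOn vl Pl with hul
  set ur := hwtOn vr Pr with hur
  set xl := ((univ : Finset {x // x ∈ Pls}).filter
      fun s : {x // x ∈ Pls} => vl ↑s ≠ 0).card with hxl
  set xr := ((univ : Finset {x // x ∈ Pls}).filter
      fun s : {x // x ∈ Pls} => vr ↑(a s) ≠ 0).card with hxr
  set zl := ((univ : Finset {x // x ∈ Pls}).filter
      fun s : {x // x ∈ Pls} => ¬ vl ↑s ≠ 0).card with hzl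
  set zr := ((univ : Finset {x // x ∈ Pls}).filter
      fun s : {x // x ∈ Pls} => ¬ vr ↑(a s) ≠ 0).card with hzr
  have hsplitl : xl + zl = Pls.card := by
    rw [hxl, hzl, Finset.card_filter_add_card_filter_not, Finset.card_univ,
      Fintype.card_coe]
  have hsplitr : xr + zr = Pls.card := by
    rw [hxr, hzr, Finset.card_filter_add_card_filter_not, Finset.card_univ,
      Fintype.card_coe]
  -- xl ≤ A + xr, xr ≤ A + xl
  have keyl : xl ≤ A + xr := by
    calc xl ≤ (((univ : Finset {x // x ∈ Pls}).filter
          fun s : {x // x ∈ Pls} => vl ↑s + vr ↑(a s) ≠ 0) ∪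
        ((univ : Finset {x // x ∈ Pls}).filter
          fun s : {x // x ∈ Pls} => vr ↑(a s) ≠ 0)).card := by
          apply Finset.card_le_card
          intro s hs
          simp only [Finset.mem_filter, Finset.mem_univ, true_and] at hs
          simp only [Finset.mem_union, Finset.mem_filter, Finset.mem_univ, true_and]
          by_contra hc
          push_neg at hc
          obtain ⟨hc1, hc2⟩ := hc
          rw [hc2, add_zero] at hc1
          exact hs hc1
      _ ≤ A + xr := Finset.card_union_le _ _
  have keyr : xr ≤ A + xl := by
    calc xr ≤ (((univ : Finset {x // x ∈ Pls}).filter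
          fun s : {x // x ∈ Pls} => vl ↑s + vr ↑(a s) ≠ 0) ∪
        ((univ : Finset {x // x ∈ Pls}).filter
          fun s : {x // x ∈ Pls} => vl ↑s ≠ 0)).card := by
          apply Finset.card_le_card
          intro s hs
          simp only [Finset.mem_filter, Finset.mem_univ, true_and] at hs
          simp only [Finset.mem_union, Finset.mem_filter, Finset.mem_univ, true_and]
          by_contra hc
          push_neg at hc
          obtain ⟨hc1, hc2⟩ := hc
          rw [hc2, zero_add] at hc1
          exact hs hc1
      _ ≤ A + xl := Finset.card_union_le _ _
  -- xl ≤ ul, zl ≤ pl - ul etc.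
  have hxl_eq : xl = (Pls.filter fun i => vl i ≠ 0).card :=
    hxl.trans (subtype_filter_card Pls (fun i => vl i ≠ 0))
  have hxl_le : xl ≤ ul := by
    rw [hxl_eq, hul]
    exact Finset.card_le_card (Finset.filter_subset_filter _ hPls)
  have hzl_le : zl ≤ Pl.card - ul := by
    have h0 : zl = (Pls.filter fun i => ¬ vl i ≠ 0).card :=
      hzl.trans (subtype_filter_card Pls (fun i => ¬ vl i ≠ 0))
    have h1 : (Pls.filter fun i => ¬ vl i ≠ 0).card ≤ (Pl.filter fun i => ¬ vl i ≠ 0).card :=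
      Finset.card_le_card (Finset.filter_subset_filter _ hPls)
    have h2 : ul + (Pl.filter fun i => ¬ vl i ≠ 0).card = Pl.card := by
      rw [hul]; exact Finset.card_filter_add_card_filter_not _
    omega
  have hxr_eq : xr = (Prs.filter fun i => vr i ≠ 0).card :=
    hxr.trans ((equiv_filter_card a (fun y : {y // y ∈ Prs} => vr ↑y ≠ 0)).trans
      (subtype_filter_card Prs (fun i => vr i ≠ 0)))
  have hxr_le : xr ≤ ur := by
    rw [hxr_eq, hur]
    exact Finset.card_le_card (Finset.filter_subset_filter _ hPrs)
  have hzr_le : zr ≤ Pr.card - ur := by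
    have h0 : zr = (Prs.filter fun i => ¬ vr i ≠ 0).card :=
      hzr.trans ((equiv_filter_card a (fun y : {y // y ∈ Prs} => ¬ vr ↑y ≠ 0)).trans
        (subtype_filter_card Prs (fun i => ¬ vr i ≠ 0)))
    have h1 : (Prs.filter fun i => ¬ vr i ≠ 0).card ≤ (Pr.filter fun i => ¬ vr i ≠ 0).card :=
      Finset.card_le_card (Finset.filter_subset_filter _ hPrs)
    have h2 : ur + (Pr.filter fun i => ¬ vr i ≠ 0).card = Pr.card := by
      rw [hur]; exact Finset.card_filter_add_card_filter_not _
    omega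
  have hul_le : ul ≤ Pl.card := Finset.card_le_card (Finset.filter_subset _ _)
  have hur_le : ur ≤ Pr.card := Finset.card_le_card (Finset.filter_subset _ _)
  have hbl := hl vl
  have hbr := hr vr
  rw [hout, hwtOn_split, hUcard]
  rw [← hul, ← hur] at *
  omega
end

section
/- Let Z̄ be an irreducible Z-type logical operator of a CSS stabilizer code, and let P_X be any X-type Pauli operator commuting with Z̄. Then there exists an X-type stabilizer S of the code such that S·P_X has support disjoint from the support of Z̄. -/
open Matrix

/-- **cleaning corollary.** Let `Z̄ = Z(v)` be an irreducible nontrivial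
`Z`-type logical operator of a CSS code and `P_X = X(u)` an `X`-type Pauli commuting with
`Z̄` (even overlap, `u ⬝ v = 0`).  Then there is an `X`-type stabilizer `s` (a sum of rows
of `H_X`) such that `s + u` has support disjoint from `supp(v)`. -/
theorem css_cleaning {rX rZ n : ℕ}
    (HX : Matrix (Fin rX) (Fin n) (ZMod 2)) (HZ : Matrix (Fin rZ) (Fin n) (ZMod 2))
    (hcss : HX * HZ.transpose = 0)
    (v : Fin n → ZMod 2)
    (hcomm : HX.mulVec v = 0)
    (hnontriv : ¬ ∃ c : Fin rZ → ZMod 2, Matrix.vecMul c HZ = v)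
    (hirr : ∀ w : Fin n → ZMod 2,
      (∀ i, v i = 0 → w i = 0) → HX.mulVec w = 0 → w = 0 ∨ w = v)
    (u : Fin n → ZMod 2) (hcommute : u ⬝ᵥ v = 0) :
    ∃ c : Fin rX → ZMod 2, ∀ i, v i ≠ 0 → Matrix.vecMul c HX i + u i = 0 := by
  classical
  have two : ∀ x : ZMod 2, x + x = 0 := by decide
  have one_of : ∀ x : ZMod 2, x ≠ 0 → x = 1 := by decide
  set S := {i : Fin n // v i ≠ 0} with hS
  let g : (Fin rX → ZMod 2) →ₗ[ZMod 2] (S → ZMod 2) :=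
    (LinearMap.funLeft (ZMod 2) (ZMod 2) (Subtype.val : S → Fin n)).comp HX.vecMulLinear
  set W : Subspace (ZMod 2) (S → ZMod 2) := LinearMap.range g with hW
  -- sum over Fin n of things vanishing off supp v equals sum over S
  have sum_subtype : ∀ (F : Fin n → ZMod 2), (∀ i, v i = 0 → F i = 0) →
      ∑ i, F i = ∑ i : S, F i.1 := by
    intro F hF
    rw [← Finset.sum_filter_of_ne (p := fun i => v i ≠ 0)
      (fun i _ h hv => h (hF i hv))]
    exact (Finset.sum_subtype (p := fun i => v i ≠ 0)
      (Finset.univ.filter fun i => v i ≠ 0) (by simp) (fun i => F i))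
  have key : (fun i : S => u i.1) ∈ W := by
    rw [← Subspace.forall_mem_dualAnnihilator_apply_eq_zero_iff]
    intro φ hφ
    rw [Submodule.mem_dualAnnihilator] at hφ
    -- represent φ by a vector w
    set w : S → ZMod 2 := fun i => φ (fun j => if i = j then 1 else 0) with hw
    have φeq : ∀ x : S → ZMod 2, φ x = ∑ i : S, x i * w i := by
      intro x
      conv_lhs => rw [pi_eq_sum_univ x]
      rw [map_sum]
      refine Finset.sum_congr rfl fun i _ => ?_
      rw [_root_.map_smul, smul_eq_mul]
    -- extend w by zero
    set w' : Fin n → ZMod 2 := fun i => if h : v i = 0 then 0 else w ⟨i, h⟩ with hw'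
    have hsupp : ∀ i, v i = 0 → w' i = 0 := fun i h => by simp [hw', h]
    have hker : HX.mulVec w' = 0 := by
      funext j
      have hrow : g (Pi.single j 1) ∈ W := ⟨Pi.single j 1, rfl⟩
      have h0 := hφ _ hrow
      rw [φeq] at h0
      have hrowval : ∀ i : S, g (Pi.single j 1) i = HX j i.1 := by
        intro i
        simp [g, LinearMap.funLeft, Matrix.vecMulLinear, Matrix.vecMul, dotProduct,
          Pi.single_apply]
      rw [Finset.sum_congr rfl (fun i _ => by rw [hrowval])] at h0
      show HX.mulVec w' j = 0
      rw [Matrix.mulVec, dotProduct]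
      rw [sum_subtype (fun i => HX j i * w' i) (fun i h => by simp [hw', h])]
      have heq : ∑ i : S, HX j i.1 * w' i.1 = ∑ i : S, HX j i.1 * w i :=
        Finset.sum_congr rfl fun i _ => by simp [hw', i.2]
      rw [heq]
      exact h0
    rcases hirr w' hsupp hker with h | h
    · have : w = 0 := by
        funext i
        have := congrFun h i.1
        simpa [hw', i.2] using this
      rw [φeq, this]
      simp
    · have hwone : ∀ i : S, w i = 1 := by
        intro i
        have := congrFun h i.1
        rw [hw'] at this
        simp only [i.2, dite_false] at this
        rw [this]
        exact one_of _ i.2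
      rw [φeq]
      have : ∑ i : S, u i.1 * w i = ∑ i : S, u i.1 * v i.1 := by
        refine Finset.sum_congr rfl fun i _ => ?_
        rw [hwone i, one_of _ i.2]
      rw [this, ← sum_subtype (fun i => u i * v i) (fun i h => by simp [h])]
      exact hcommute
  obtain ⟨c, hc⟩ := key
  refine ⟨c, fun i hi => ?_⟩
  have := congrFun hc ⟨i, hi⟩
  simp only [g, LinearMap.comp_apply, LinearMap.funLeft_apply, Matrix.vecMulLinear_apply] at this
  rw [this]
  exact two _
end

section
/- In the distance-d toric code, any representative of the logical operator X̄^(1) must have nonzero support in every one of the d primal layers Q^Z_0, ..., Q^Z_{d−1}; consequently, any representative of the product Z̄^(1)·X̄^(2) with the minimum-weight representatives being Z(1⃗ ∈ Q^Z_i) and X(1⃗ ∈ Q^X_j) respectively has weight at least 2d. More precisely: the weight of Z̄^(1)X̄^(2) cannot be reduced below 2d by multiplying by stabilizers and by logical operators other than Z̄^(1), X̄^(2), and Z̄^(1)X̄^(2). -/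
open Matrix Finset

/-- The cyclic shift matrix `C`. -/
def shiftC (d : ℕ) [NeZero d] : Matrix (Fin d) (Fin d) (ZMod 2) :=
  Matrix.of fun i j => if j = i + 1 then 1 else 0

/-- The cyclic repetition-code check matrix `H_C = I + C`. -/
def HCm (d : ℕ) [NeZero d] : Matrix (Fin d) (Fin d) (ZMod 2) :=
  1 + shiftC d

/-- Toric-code qubits: primal layers `Q^Z_i` (left) and dual layers `Q^X_i` (right). -/
abbrev ToricQubit (d : ℕ) := (Fin d × Fin d) ⊕ (Fin d × Fin d)

/-- `X`-check `a ∈ C^X_i`: acts on `Q^Z_i` via row `a` of `H_C`, and on qubit `a` of both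
`Q^X_{i-1}` and `Q^X_i`. -/
def xCheck (d : ℕ) [NeZero d] (i a : Fin d) : ToricQubit d → ZMod 2 :=
  fun q =>
    match q with
    | Sum.inl (l, j) => if l = i then HCm d a j else 0
    | Sum.inr (l, j) =>
        (if l = i ∧ j = a then 1 else 0) + (if l + 1 = i ∧ j = a then 1 else 0)

/-- `Z`-check `a ∈ C^Z_i`: acts on qubit `a` of `Q^Z_i` and `Q^Z_{i+1}`, and on `Q^X_i`
via row `a` of `H_Cᵀ`. -/
def zCheck (d : ℕ) [NeZero d] (i a : Fin d) : ToricQubit d → ZMod 2 :=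
  fun q =>
    match q with
    | Sum.inl (l, j) =>
        (if l = i ∧ j = a then 1 else 0) + (if l = i + 1 ∧ j = a then 1 else 0)
    | Sum.inr (l, j) => if l = i then (HCm d)ᵀ a j else 0

/-- Minimum-weight representative of `X̄^(1)`: one qubit (column `0`) in each primal layer. -/
def x1vec (d : ℕ) [NeZero d] : ToricQubit d → ZMod 2 :=
  fun q => match q with
    | Sum.inl (_, j) => if j = 0 then 1 else 0
    | Sum.inr _ => 0

/-- Minimum-weight representative of `X̄^(2)`: all of the dual layer `Q^X_0`. -/
def x2vec (d : ℕ) [NeZero d] : ToricQubit d → ZMod 2 :=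
  fun q => match q with
    | Sum.inl _ => 0
    | Sum.inr (l, _) => if l = 0 then 1 else 0

/-- Minimum-weight representative of `Z̄^(1)`: all of the primal layer `Q^Z_0`. -/
def z1vec (d : ℕ) [NeZero d] : ToricQubit d → ZMod 2 :=
  fun q => match q with
    | Sum.inl (l, _) => if l = 0 then 1 else 0
    | Sum.inr _ => 0

/-- Minimum-weight representative of `Z̄^(2)`: one qubit (column `0`) in each dual layer. -/
def z2vec (d : ℕ) [NeZero d] : ToricQubit d → ZMod 2 :=
  fun q => match q with
    | Sum.inl _ => 0
    | Sum.inr (_, j) => if j = 0 then 1 else 0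

/-- Span of the `X`-checks (the `X`-stabilizer group, additively). -/
def xSpan (d : ℕ) [NeZero d] : Submodule (ZMod 2) (ToricQubit d → ZMod 2) :=
  Submodule.span (ZMod 2) (Set.range fun p : Fin d × Fin d => xCheck d p.1 p.2)

/-- Span of the `Z`-checks. -/
def zSpan (d : ℕ) [NeZero d] : Submodule (ZMod 2) (ToricQubit d → ZMod 2) :=
  Submodule.span (ZMod 2) (Set.range fun p : Fin d × Fin d => zCheck d p.1 p.2)

/-- Weight of a Pauli operator with `X`-part `xv` and `Z`-part `zv`. -/
def pWeight {d : ℕ} (xv zv : ToricQubit d → ZMod 2) : ℕ :=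
  (Finset.univ.filter fun q => xv q ≠ 0 ∨ zv q ≠ 0).card

/-! Each logical operator involved is detected by the parity of a line of qubits: that sum
vanishes on every check and on the other logical operators that may be multiplied in, but is `1`
on the operator itself, so the line meets the support of every representative. For each column
`j`, the dual qubits of column `j` detect `X̄^(2)` and the primal qubits of column `j` detect
`Z̄^(1)`; these `2d` lines are pairwise disjoint, so the weight is at least `2d`. -/

theorem Submodule.sum_comp_eq_zero_of_mem_span {ι κ R : Type*} [CommSemiring R] [Fintype κ]
    {S : Set (ι → R)} (e : κ → ι) (hS : ∀ v ∈ S, ∑ k, v (e k) = 0) {c : ι → R}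
    (hc : c ∈ Submodule.span R S) : ∑ k, c (e k) = 0 := by
  let φ : (ι → R) →ₗ[R] R := ∑ k, LinearMap.proj (e k)
  have hφ (v : ι → R) : φ v = ∑ k, v (e k) := by simp [φ]
  have : Submodule.span R S ≤ LinearMap.ker φ :=
    Submodule.span_le.mpr fun v hv => by simpa [hφ] using hS v hv
  simpa [hφ] using this hc

theorem Fintype.exists_ne_zero_of_sum_ne_zero {κ M : Type*} [Fintype κ] [AddCommMonoid M]
    {f : κ → M} (h : ∑ k, f k ≠ 0) : ∃ k, f k ≠ 0 :=
  let ⟨k, _, hk⟩ := Finset.exists_ne_zero_of_sum_ne_zero h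
  ⟨k, hk⟩

theorem Finset.card_le_card_filter_of_forall_exists {α β : Type*} [Fintype α] [Fintype β]
    (π : α → β) (p : α → Prop) [DecidablePred p] (h : ∀ b, ∃ a, p a ∧ π a = b) :
    Fintype.card β ≤ (univ.filter p).card :=
  Finset.card_le_card_of_surjOn π fun b _ => by simpa using h b

namespace Toric

theorem two_mul_le_pWeight {d : ℕ} {xv zv : ToricQubit d → ZMod 2}
    (hx : ∀ j, ∃ l, xv (.inr (l, j)) ≠ 0) (hz : ∀ j, ∃ l, zv (.inl (l, j)) ≠ 0) :
    2 * d ≤ pWeight xv zv := by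
  have hcols : ∀ k : Fin d ⊕ Fin d,
      ∃ q, (xv q ≠ 0 ∨ zv q ≠ 0) ∧ Sum.map Prod.snd Prod.snd q = k := by
    rintro (j | j)
    · obtain ⟨l, hl⟩ := hz j
      exact ⟨.inl (l, j), .inr hl, rfl⟩
    · obtain ⟨l, hl⟩ := hx j
      exact ⟨.inr (l, j), .inl hl, rfl⟩
  calc 2 * d = Fintype.card (Fin d ⊕ Fin d) := by simp [two_mul]
    _ ≤ pWeight xv zv := Finset.card_le_card_filter_of_forall_exists _ _ hcols

variable {d : ℕ} [NeZero d]

theorem HCm_row_sum (a : Fin d) : ∑ j, HCm d a j = 0 := by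
  simp [HCm, shiftC, Matrix.add_apply, Matrix.one_apply, Finset.sum_add_distrib,
    CharTwo.add_self_eq_zero]

theorem xCheck_primal_row_sum (i a l : Fin d) : ∑ j, xCheck d i a (.inl (l, j)) = 0 := by
  by_cases h : l = i <;> simp [xCheck, h, HCm_row_sum]

theorem xCheck_dual_col_sum (i a j : Fin d) : ∑ l, xCheck d i a (.inr (l, j)) = 0 := by
  by_cases h : j = a <;>
    simp [xCheck, h, Finset.sum_add_distrib, ← eq_sub_iff_add_eq]

theorem zCheck_primal_col_sum (i a j : Fin d) : ∑ l, zCheck d i a (.inl (l, j)) = 0 := by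
  by_cases h : j = a <;> simp [zCheck, h, Finset.sum_add_distrib, CharTwo.add_self_eq_zero]

theorem xSpan_primal_row_sum {c : ToricQubit d → ZMod 2} (hc : c ∈ xSpan d) (i : Fin d) :
    ∑ j, c (.inl (i, j)) = 0 :=
  Submodule.sum_comp_eq_zero_of_mem_span _
    (by rintro _ ⟨⟨i', a⟩, rfl⟩; exact xCheck_primal_row_sum i' a i) hc

theorem xSpan_dual_col_sum {c : ToricQubit d → ZMod 2} (hc : c ∈ xSpan d) (j : Fin d) :
    ∑ l, c (.inr (l, j)) = 0 :=
  Submodule.sum_comp_eq_zero_of_mem_span _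
    (by rintro _ ⟨⟨i, a⟩, rfl⟩; exact xCheck_dual_col_sum i a j) hc

theorem zSpan_primal_col_sum {c : ToricQubit d → ZMod 2} (hc : c ∈ zSpan d) (j : Fin d) :
    ∑ l, c (.inl (l, j)) = 0 :=
  Submodule.sum_comp_eq_zero_of_mem_span _
    (by rintro _ ⟨⟨i, a⟩, rfl⟩; exact zCheck_primal_col_sum i a j) hc

theorem exists_primal_row_ne_zero {c : ToricQubit d → ZMod 2} (hc : c ∈ xSpan d) (i : Fin d) :
    ∃ j, (x1vec d + c) (.inl (i, j)) ≠ 0 :=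
  Fintype.exists_ne_zero_of_sum_ne_zero <| by
    simp [Finset.sum_add_distrib, xSpan_primal_row_sum hc, x1vec]

theorem exists_dual_col_ne_zero {sx : ToricQubit d → ZMod 2} (hsx : sx ∈ xSpan d)
    (a : ZMod 2) (j : Fin d) : ∃ l, (x2vec d + a • x1vec d + sx) (.inr (l, j)) ≠ 0 :=
  Fintype.exists_ne_zero_of_sum_ne_zero <| by
    simp [Finset.sum_add_distrib, xSpan_dual_col_sum hsx, x1vec, x2vec]

theorem exists_primal_col_ne_zero {sz : ToricQubit d → ZMod 2} (hsz : sz ∈ zSpan d)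
    (b : ZMod 2) (j : Fin d) : ∃ l, (z1vec d + b • z2vec d + sz) (.inl (l, j)) ≠ 0 :=
  Fintype.exists_ne_zero_of_sum_ne_zero <| by
    simp [Finset.sum_add_distrib, zSpan_primal_col_sum hsz, z1vec, z2vec]

end Toric

open Toric in
/-- In the distance-`d` toric code, every representative of `X̄^(1)`
(i.e. `x1 + c` with `c` a sum of `X`-checks) has nonzero support in all `d` primal
layers; consequently the weight of `Z̄^(1)·X̄^(2)` cannot be reduced below `2d` by
multiplying by stabilizers and by logical operators other than `Z̄^(1)`, `X̄^(2)`, and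
`Z̄^(1)X̄^(2)` (i.e. by elements of the group generated by `X̄^(1)` and `Z̄^(2)` and the
stabilizers). -/
theorem toric_Z1X2_weight (d : ℕ) [NeZero d] :
    (∀ c ∈ xSpan d, ∀ i : Fin d, ∃ j : Fin d, (x1vec d + c) (Sum.inl (i, j)) ≠ 0) ∧
    (∀ sx ∈ xSpan d, ∀ sz ∈ zSpan d, ∀ a b : ZMod 2,
      2 * d ≤ pWeight (x2vec d + a • x1vec d + sx) (z1vec d + b • z2vec d + sz)) :=
  ⟨fun _ hc => exists_primal_row_ne_zero hc, fun _ hsx _ hsz a b =>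
    two_mul_le_pWeight (exists_dual_col_ne_zero hsx a) (exists_primal_col_ne_zero hsz b)⟩
end

section
/- Let Err be a set of at most d−1 two-qubit X-error events, where each event places at most one X-error in some primal layer Q^Z_i and at most one X-error in the corresponding dual layer Q^X_i of the distance-d toric code. Then the total resulting X-error is not equivalent (modulo X-stabilizers) to either nontrivial X-logical X̄^(1) or X̄^(2) or their product: any X-logical representative must have support in all d primal layers (for X̄^(1)) or all d dual layers (for X̄^(2)), while the error has support in at most d−1 primal layers and at most d−1 dual layers. -/
open Matrix Finset

/-! Every `X`-stabilizer has even weight on each primal layer `Q^Z_i` and on each dual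
column `{(l, j) | l : Fin d}`, while `X̄^(1)` has odd weight on every primal layer and
`X̄^(2)` odd weight on every dual column. Fewer than `d` events miss some primal layer
entirely and put no dual error in some column; on that layer, resp. column, the error has
even weight, so it cannot differ from `a • X̄^(1) + b • X̄^(2)` by a stabilizer unless
`a = 0`, resp. `b = 0`. -/

section Parity

variable (d : ℕ) [NeZero d]

def primalLayerParity (i : Fin d) : (ToricQubit d → ZMod 2) →ₗ[ZMod 2] ZMod 2 where
  toFun v := ∑ j, v (Sum.inl (i, j))
  map_add' v w := by simp only [Pi.add_apply, sum_add_distrib]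
  map_smul' c v := by simp only [Pi.smul_apply, smul_eq_mul, RingHom.id_apply, mul_sum]

def dualColumnParity (j : Fin d) : (ToricQubit d → ZMod 2) →ₗ[ZMod 2] ZMod 2 where
  toFun v := ∑ l, v (Sum.inr (l, j))
  map_add' v w := by simp only [Pi.add_apply, sum_add_distrib]
  map_smul' c v := by simp only [Pi.smul_apply, smul_eq_mul, RingHom.id_apply, mul_sum]

theorem sum_HCm_row (a : Fin d) : ∑ j, HCm d a j = 0 := by
  simp only [HCm, shiftC, Matrix.add_apply, one_apply, of_apply, sum_add_distrib, sum_ite_eq,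
    sum_ite_eq', mem_univ, if_true]
  decide

theorem primalLayerParity_xCheck (i i' a : Fin d) :
    primalLayerParity d i (xCheck d i' a) = 0 := by
  by_cases h : i = i' <;> simp [primalLayerParity, xCheck, h, sum_HCm_row]

theorem dualColumnParity_xCheck (j i' a : Fin d) :
    dualColumnParity d j (xCheck d i' a) = 0 := by
  by_cases h : j = a
  · have hshift : ∑ l : Fin d, (if l + 1 = i' then (1 : ZMod 2) else 0) = 1 := by
      simp [← eq_sub_iff_add_eq]
    simp only [dualColumnParity, xCheck, h, and_true, LinearMap.coe_mk, AddHom.coe_mk,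
      sum_add_distrib, hshift, sum_ite_eq', mem_univ, if_true]
    decide
  · simp [dualColumnParity, xCheck, h]

theorem xSpan_le_ker_primalLayerParity (i : Fin d) :
    xSpan d ≤ LinearMap.ker (primalLayerParity d i) :=
  Submodule.span_le.2 <| Set.range_subset_iff.2 fun p => primalLayerParity_xCheck d i p.1 p.2

theorem xSpan_le_ker_dualColumnParity (j : Fin d) :
    xSpan d ≤ LinearMap.ker (dualColumnParity d j) :=
  Submodule.span_le.2 <| Set.range_subset_iff.2 fun p => dualColumnParity_xCheck d j p.1 p.2

@[simp] theorem primalLayerParity_x1vec (i : Fin d) : primalLayerParity d i (x1vec d) = 1 := by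
  simp [primalLayerParity, x1vec]

@[simp] theorem primalLayerParity_x2vec (i : Fin d) : primalLayerParity d i (x2vec d) = 0 := by
  simp [primalLayerParity, x2vec]

@[simp] theorem dualColumnParity_x1vec (j : Fin d) : dualColumnParity d j (x1vec d) = 0 := by
  simp [dualColumnParity, x1vec]

@[simp] theorem dualColumnParity_x2vec (j : Fin d) : dualColumnParity d j (x2vec d) = 1 := by
  simp [dualColumnParity, x2vec]

end Parity

theorem exists_forall_ne_of_card_lt {α β : Type*} [Fintype α] [Fintype β]
    (h : Fintype.card α < Fintype.card β) (f : α → β) : ∃ b, ∀ a, f a ≠ b := by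
  by_contra! hsurj
  exact (Fintype.card_le_of_surjective f hsurj).not_gt h

/-- Let at most `d − 1` two-qubit `X`-error events occur, event `t`
placing at most one `X`-error (at optional column `perr t`) in the primal layer
`layer t` and at most one (at optional column `derr t`) in the corresponding dual layer.
Then the total error is not equivalent modulo `X`-stabilizers to any nontrivial
`X`-logical (`X̄^(1)`, `X̄^(2)`, or their product). -/
theorem few_faults_detectable (d : ℕ) [NeZero d] (k : ℕ) (hk : k < d)
    (layer : Fin k → Fin d) (perr derr : Fin k → Option (Fin d)) :
    ∀ sx ∈ xSpan d, ∀ a b : ZMod 2, ¬(a = 0 ∧ b = 0) →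
      (fun q : ToricQubit d =>
        ∑ t : Fin k,
          (match q with
           | Sum.inl (l, j) => if l = layer t ∧ perr t = some j then (1 : ZMod 2) else 0
           | Sum.inr (l, j) => if l = layer t ∧ derr t = some j then (1 : ZMod 2) else 0))
        ≠ a • x1vec d + b • x2vec d + sx := by
  intro sx hsx a b hab heq
  have hcard : Fintype.card (Fin k) < Fintype.card (Fin d) := by simpa using hk
  obtain ⟨i, hi⟩ := exists_forall_ne_of_card_lt hcard layer
  obtain ⟨j, hj⟩ := exists_forall_ne_of_card_lt hcard fun t => (derr t).getD 0
  have hsx_i : primalLayerParity d i sx = 0 := xSpan_le_ker_primalLayerParity d i hsx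
  have hsx_j : dualColumnParity d j sx = 0 := xSpan_le_ker_dualColumnParity d j hsx
  have hprimal := congrArg (primalLayerParity d i) heq
  have hdual := congrArg (dualColumnParity d j) heq
  simp only [map_add, map_smul, hsx_i, hsx_j, primalLayerParity_x1vec, primalLayerParity_x2vec,
    dualColumnParity_x1vec, dualColumnParity_x2vec, smul_eq_mul, mul_one, mul_zero,
    add_zero, zero_add] at hprimal hdual
  refine hab ⟨?_, ?_⟩
  · rw [← hprimal]
    show ∑ j', ∑ t, (if i = layer t ∧ perr t = some j' then 1 else 0) = 0
    exact sum_eq_zero fun _ _ => sum_eq_zero fun t _ => if_neg fun h => hi t h.1.symm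
  · rw [← hdual]
    show ∑ l, ∑ t, (if l = layer t ∧ derr t = some j then 1 else 0) = 0
    exact sum_eq_zero fun _ _ => sum_eq_zero fun t _ => if_neg fun h => hj t (by simp [h.2])
end
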